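/- arXiv:0912.3744 — 7 statements merged into one kernel-verified Lean document; each statement's English description precedes it below -/
import Mathlib

section
/- Under the protocol data below with Schmidt rank P equal to N, if the protocol corrects the channel faithfully and deterministically, i.e. Σ_{η∈Fin M} Σ_{k,l∈Fin P} Λ^η_{k,l} R (Λ^η_{k,l})† = Ψ₀ for the given positive-definite Choi state R, then μ_i = 1/√N for every i ∈ Fin P; that is, the pre-shared bipartite state must be maximally entangled. -/
open Matrix Kronecker ComplexOrder

/-!
Positivity of `R` forces every `(Λ η k l)ᴴ` to kill the orthogonal complement of `ψ₀`, so each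
column of `Λ η k l` is a multiple of `ψ₀`: `Λ η k l (a, b) (c, d) = if a = b then τ else 0`.
For fixed `η, l, c, d`, stacking these columns over `k` gives `V * W`, where
`V (k, a) i = B η k i a c` is an isometry by unitarity of `B` and `W i b = μ i * A η l i d b`.
Hence `Wᴴ * W` is scalar, and since `W` is square so is `W * Wᴴ`: the row norms
`μ i ^ 2 * ∑ b, ‖A η l i d b‖ ^ 2` do not depend on `i`. Summing over `η, l, d` and using
`∑ η, ∑ l, trace ((A η l i)ᴴ * A η l i) = N` shows that `μ i ^ 2 * N` does not depend on `i`,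
so `μ i ^ 2 = 1 / N`.
-/

namespace Matrix

variable {𝕜 : Type*} [RCLike 𝕜] {ι κ m n : Type*}

theorem conjTranspose_mulVec_eq_zero_of_sum_mul_mul_conjTranspose [Fintype ι] [Fintype m]
    [Fintype n] {L : ι → Matrix m n 𝕜} {R : Matrix n n 𝕜} (hR : R.PosDef) {x : m → 𝕜}
    (hx : star x ⬝ᵥ (∑ j, L j * R * (L j)ᴴ) *ᵥ x = 0) (j : ι) : (L j)ᴴ *ᵥ x = 0 := by
  have hsandwich : ∀ j, star x ⬝ᵥ (L j * R * (L j)ᴴ) *ᵥ x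
      = star ((L j)ᴴ *ᵥ x) ⬝ᵥ R *ᵥ ((L j)ᴴ *ᵥ x) := fun j => by
    rw [star_mulVec, conjTranspose_conjTranspose, ← dotProduct_mulVec, mulVec_mulVec,
      mulVec_mulVec]
  simp only [sum_mulVec, dotProduct_sum, hsandwich] at hx
  have hzero := (Finset.sum_eq_zero_iff_of_nonneg fun j _ =>
    hR.posSemidef.dotProduct_mulVec_nonneg _).mp hx j (Finset.mem_univ j)
  by_contra hne
  exact (hR.dotProduct_mulVec_pos hne).ne' hzero

theorem apply_eq_ite_of_conjTranspose_mulVec_eq_zero [Fintype n] [DecidableEq n]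
    {L : Matrix (n × n) m 𝕜} (hL : ∀ x : n × n → 𝕜, ∑ a, x (a, a) = 0 → Lᴴ *ᵥ x = 0)
    (a₀ a b : n) (c : m) : L (a, b) c = if a = b then L (a₀, a₀) c else 0 := by
  have hsingle : ∀ q, (Lᴴ *ᵥ Pi.single q 1) c = star (L q c) := fun q => by simp
  split_ifs with hab
  · subst hab
    have h := congrFun (hL (Pi.single (a, a) 1 - Pi.single (a₀, a₀) 1) (by
      simp [Pi.single_apply, Finset.sum_sub_distrib])) c
    rw [mulVec_sub, Pi.sub_apply, hsingle, hsingle] at h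
    exact star_injective (sub_eq_zero.mp h)
  · have h := congrFun (hL (Pi.single (a, b) 1) (by simp [Pi.single_apply, hab])) c
    rw [hsingle] at h
    exact star_eq_zero.mp h

theorem conjTranspose_mul_self_eq_smul_one_of_apply_eq_ite [Fintype κ] [Fintype n]
    [DecidableEq n] {X : Matrix (κ × n) n 𝕜} {τ : κ → 𝕜}
    (hX : ∀ k a b, X (k, a) b = if a = b then τ k else 0) :
    Xᴴ * X = (∑ k, star (τ k) * τ k) • 1 := by
  ext b b'
  rcases eq_or_ne b b' with rfl | hbb
  · simp [mul_apply, hX, Fintype.sum_prod_type]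
  · simp [mul_apply, hX, Fintype.sum_prod_type, hbb, hbb.symm]

theorem mul_conjTranspose_self_eq_smul_one_of_conjTranspose_mul_self_eq [Fintype n]
    [DecidableEq n] {W : Matrix n n 𝕜} {g : 𝕜} (h : Wᴴ * W = g • 1) : W * Wᴴ = g • 1 := by
  rcases eq_or_ne g 0 with rfl | hg
  · rw [zero_smul, conjTranspose_mul_self_eq_zero] at h
    simp [h]
  · have hinv : (g⁻¹ • Wᴴ) * W = 1 := by
      rw [smul_mul_assoc, h, smul_smul, inv_mul_cancel₀ hg, one_smul]
    have hinv' := mul_eq_one_comm.mp hinv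
    rw [mul_smul_comm] at hinv'
    rw [← hinv', smul_smul, mul_inv_cancel₀ hg, one_smul]

theorem mul_conjTranspose_self_eq_smul_one_of_isometry_mul [Fintype m] [Fintype n]
    [DecidableEq n] {V : Matrix m n 𝕜} (hV : Vᴴ * V = 1) {W : Matrix n n 𝕜} {g : 𝕜}
    (h : (V * W)ᴴ * (V * W) = g • 1) : W * Wᴴ = g • 1 := by
  apply mul_conjTranspose_self_eq_smul_one_of_conjTranspose_mul_self_eq
  rwa [conjTranspose_mul, Matrix.mul_assoc, ← Matrix.mul_assoc Vᴴ, hV, Matrix.one_mul] at h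

end Matrix

theorem eq_one_div_sqrt_card_of_sq_eq {ι : Type*} [Fintype ι] {μ : ι → ℝ} (hμ : ∀ i, 0 ≤ μ i)
    (hsum : ∑ i, μ i ^ 2 = 1) (hconst : ∀ i j, μ i ^ 2 = μ j ^ 2) (i : ι) :
    μ i = 1 / √(Fintype.card ι) := by
  have hcard : (Fintype.card ι : ℝ) * μ i ^ 2 = 1 := by
    rw [← hsum, ← nsmul_eq_mul, ← Finset.card_univ, ← Finset.sum_const]
    exact Finset.sum_congr rfl fun j _ => hconst i j
  rw [← Real.sqrt_sq (hμ i), eq_one_div_of_mul_eq_one_right hcard, one_div, Real.sqrt_inv, one_div]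

theorem star_dotProduct_mulVec_eq_zero_of_sum_diag_eq_zero {n : Type*} [Fintype n]
    [DecidableEq n] {ψ : n × n → ℂ} {Ψ : Matrix (n × n) (n × n) ℂ} {r : ℂ}
    (hψ : ∀ q, ψ q = if q.1 = q.2 then r else 0)
    (hΨ : ∀ q q', Ψ q q' = ψ q * starRingEnd ℂ (ψ q')) {x : n × n → ℂ}
    (hx : ∑ a, x (a, a) = 0) : star x ⬝ᵥ Ψ *ᵥ x = 0 := by
  have hΨ : Ψ = vecMulVec ψ (star ψ) := by ext; simp [hΨ, vecMulVec_apply]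
  have hψx : star ψ ⬝ᵥ x = 0 := by
    simp [dotProduct, hψ, Fintype.sum_prod_type, apply_ite (starRingEnd ℂ), ite_mul,
      ← Finset.mul_sum, hx]
  simp [hΨ, vecMulVec_mulVec, hψx]

section Protocol

variable {κ n : Type*} [Fintype κ] [Fintype n] [DecidableEq n]

theorem exists_sq_mul_trace_conjTranspose_mul_self_eq [Nonempty n] (μ : n → ℝ)
    (A : n → Matrix n n ℂ) (B : κ → n → Matrix n n ℂ)
    (hB : ∀ i j, ∑ k, (B k i)ᴴ * B k j = if i = j then 1 else 0)
    (hΛ : ∀ k (x : n × n → ℂ), ∑ a, x (a, a) = 0 →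
      (∑ i, (μ i : ℂ) • (B k i ⊗ₖ (A i)ᵀ))ᴴ *ᵥ x = 0) :
    ∃ g : ℂ, ∀ i, (μ i : ℂ) ^ 2 * trace ((A i)ᴴ * A i) = g := by
  obtain ⟨c⟩ : Nonempty n := inferInstance
  let V : Matrix (κ × n) n ℂ := of fun ka i => B ka.1 i ka.2 c
  have hV : Vᴴ * V = 1 := by
    ext i j
    have h := congrFun (congrFun (hB i j) c) c
    simp only [Matrix.sum_apply, mul_apply, conjTranspose_apply] at h
    simp only [V, mul_apply, Fintype.sum_prod_type, conjTranspose_apply, of_apply, h]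
    split_ifs with hij
    · subst hij; simp
    · simp [hij]
  let W : n → Matrix n n ℂ := fun d => of fun i b => (μ i : ℂ) * A i d b
  have hrow : ∀ d, ∃ g : ℂ, W d * (W d)ᴴ = g • 1 := by
    intro d
    have hX : ∀ k a b, (V * W d) (k, a) b
        = if a = b then (∑ i, (μ i : ℂ) • (B k i ⊗ₖ (A i)ᵀ)) (c, c) (c, d) else 0 := by
      intro k a b
      have h := apply_eq_ite_of_conjTranspose_mulVec_eq_zero (hΛ k) c a b (c, d)
      simpa [V, W, mul_apply, Matrix.sum_apply, mul_left_comm] using h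
    exact ⟨_, mul_conjTranspose_self_eq_smul_one_of_isometry_mul hV
      (conjTranspose_mul_self_eq_smul_one_of_apply_eq_ite hX)⟩
  choose g hg using hrow
  refine ⟨∑ d, g d, fun i => ?_⟩
  rw [trace_mul_comm]
  have hdiag : ∀ d, (W d * (W d)ᴴ) i i = g d := fun d => by simp [hg d]
  simp only [W, mul_apply, conjTranspose_apply, of_apply] at hdiag
  simp only [trace, diag_apply, mul_apply, conjTranspose_apply, Finset.mul_sum, ← hdiag]
  refine Finset.sum_congr rfl fun d _ => Finset.sum_congr rfl fun b _ => ?_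
  rw [star_mul', Complex.star_def, Complex.conj_ofReal]
  ring

end Protocol

theorem maximal_entanglement_necessary_general
    (N M P : ℕ) (hPN : P = N)
    (μ : Fin P → ℝ) (hμ : ∀ i, 0 ≤ μ i) (hμsum : ∑ i, μ i ^ 2 = 1)
    (A B : Fin M → Fin P → Fin P → Matrix (Fin N) (Fin N) ℂ)
    (hA2 : ∀ i j : Fin P, ∑ η : Fin M, ∑ k : Fin P, (A η k i)ᴴ * A η k j
        = if i = j then (1 : Matrix (Fin N) (Fin N) ℂ) else 0)
    (hB2 : ∀ (η : Fin M) (i j : Fin P), ∑ k : Fin P, (B η k i)ᴴ * B η k j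
        = if i = j then (1 : Matrix (Fin N) (Fin N) ℂ) else 0)
    (Λ : Fin M → Fin P → Fin P → Matrix (Fin N × Fin N) (Fin N × Fin N) ℂ)
    (hΛ : ∀ η k l, Λ η k l = ∑ i : Fin P, ((μ i : ℂ)) • (B η k i ⊗ₖ (A η l i)ᵀ))
    (ψ₀ : Fin N × Fin N → ℂ)
    (hψ₀ : ∀ q : Fin N × Fin N, ψ₀ q = if q.1 = q.2 then (1 / (Real.sqrt N : ℂ)) else 0)
    (Ψ₀ : Matrix (Fin N × Fin N) (Fin N × Fin N) ℂ)
    (hΨ₀ : ∀ q q' : Fin N × Fin N, Ψ₀ q q' = ψ₀ q * (starRingEnd ℂ) (ψ₀ q'))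
    (R : Matrix (Fin N × Fin N) (Fin N × Fin N) ℂ)
    (hR : R.PosDef)
    (hcorr : ∑ η : Fin M, ∑ k : Fin P, ∑ l : Fin P, Λ η k l * R * (Λ η k l)ᴴ = Ψ₀) :
    ∀ i : Fin P, μ i = 1 / Real.sqrt N := by
  subst hPN
  intro i₀
  have : Nonempty (Fin P) := ⟨i₀⟩
  have hker : ∀ η k l (x : Fin P × Fin P → ℂ), ∑ a, x (a, a) = 0 → (Λ η k l)ᴴ *ᵥ x = 0 := by
    intro η k l x hx
    refine conjTranspose_mulVec_eq_zero_of_sum_mul_mul_conjTranspose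
      (L := fun p : Fin M × Fin P × Fin P => Λ p.1 p.2.1 p.2.2) hR ?_ (η, k, l)
    simpa only [Fintype.sum_prod_type, hcorr] using
      star_dotProduct_mulVec_eq_zero_of_sum_diag_eq_zero hψ₀ hΨ₀ hx
  have hg : ∀ η l, ∃ g : ℂ, ∀ i, (μ i : ℂ) ^ 2 * trace ((A η l i)ᴴ * A η l i) = g :=
    fun η l => exists_sq_mul_trace_conjTranspose_mul_self_eq μ (A η l) (B η) (hB2 η)
      fun k => hΛ η k l ▸ hker η k l
  choose g hg using hg
  have htrace : ∀ i, ∑ η, ∑ l, trace ((A η l i)ᴴ * A η l i) = P := fun i => by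
    simp_rw [← trace_sum]
    rw [hA2 i i, if_pos rfl, trace_one, Fintype.card_fin]
  have hsq : ∀ i, (μ i : ℂ) ^ 2 * P = ∑ η, ∑ l, g η l := fun i => by
    simp_rw [← htrace i, Finset.mul_sum, hg]
  have hP : (P : ℂ) ≠ 0 := Nat.cast_ne_zero.mpr (Fin.pos i₀).ne'
  have hconst : ∀ i j, μ i ^ 2 = μ j ^ 2 := fun i j => by
    exact_mod_cast mul_right_cancel₀ hP ((hsq i).trans (hsq j).symm)
  simpa using eq_one_div_sqrt_card_of_sq_eq hμ hμsum hconst i₀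

/-- If a protocol (local operations `A`, `B` correlated by classical communication `η`,
pre-shared entanglement with Schmidt coefficients `μ` of Schmidt rank `P = N`)
deterministically and faithfully corrects a maximal-rank (positive-definite Choi state)
channel, then the pre-shared state is maximally entangled: `μ i = 1/√N` for all `i`. -/
theorem maximal_entanglement_necessary
    (N M P : ℕ) (hN : 2 ≤ N) (hM : 1 ≤ M) (hP : 1 ≤ P) (hPN : P = N)
    (μ : Fin P → ℝ) (hμ : ∀ i, 0 ≤ μ i) (hμsum : ∑ i, μ i ^ 2 = 1)
    (A B : Fin M → Fin P → Fin P → Matrix (Fin N) (Fin N) ℂ)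
    (hA1 : ∀ i j : Fin P, ∑ η : Fin M, ∑ k : Fin P, A η i k * (A η j k)ᴴ
        = if i = j then (1 : Matrix (Fin N) (Fin N) ℂ) else 0)
    (hA2 : ∀ i j : Fin P, ∑ η : Fin M, ∑ k : Fin P, (A η k i)ᴴ * A η k j
        = if i = j then (1 : Matrix (Fin N) (Fin N) ℂ) else 0)
    (hB1 : ∀ (η : Fin M) (i j : Fin P), ∑ k : Fin P, B η i k * (B η j k)ᴴ
        = if i = j then (1 : Matrix (Fin N) (Fin N) ℂ) else 0)
    (hB2 : ∀ (η : Fin M) (i j : Fin P), ∑ k : Fin P, (B η k i)ᴴ * B η k j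
        = if i = j then (1 : Matrix (Fin N) (Fin N) ℂ) else 0)
    (Λ : Fin M → Fin P → Fin P → Matrix (Fin N × Fin N) (Fin N × Fin N) ℂ)
    (hΛ : ∀ η k l, Λ η k l = ∑ i : Fin P, ((μ i : ℂ)) • (B η k i ⊗ₖ (A η l i)ᵀ))
    (ψ₀ : Fin N × Fin N → ℂ)
    (hψ₀ : ∀ q : Fin N × Fin N, ψ₀ q = if q.1 = q.2 then (1 / (Real.sqrt N : ℂ)) else 0)
    (Ψ₀ : Matrix (Fin N × Fin N) (Fin N × Fin N) ℂ)
    (hΨ₀ : ∀ q q' : Fin N × Fin N, Ψ₀ q q' = ψ₀ q * (starRingEnd ℂ) (ψ₀ q'))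
    (R : Matrix (Fin N × Fin N) (Fin N × Fin N) ℂ)
    (hR : R.PosDef) (hRtr : R.trace = 1)
    (hcorr : ∑ η : Fin M, ∑ k : Fin P, ∑ l : Fin P, Λ η k l * R * (Λ η k l)ᴴ = Ψ₀) :
    ∀ i : Fin P, μ i = 1 / Real.sqrt N :=
  maximal_entanglement_necessary_general N M P hPN μ hμ hμsum A B hA2 hB2 Λ hΛ ψ₀ hψ₀ Ψ₀ hΨ₀ R hR
    hcorr
end

section
/- Under the protocol data below, if the protocol corrects the channel faithfully and deterministically, i.e. Σ_{η∈Fin M} Σ_{k,l∈Fin P} Λ^η_{k,l} R (Λ^η_{k,l})† = Ψ₀ for the given positive-definite Choi state R, then the Schmidt coefficients satisfy Σ_{i∈Fin P} μ_i ≥ √N. -/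
/-!
Since `R` is positive definite, `∑ Λ R Λᴴ = Ψ₀` forces every `Λ^η_{k,l}` to map into the line
spanned by `ψ₀`. Contracting with `ψ₀` turns `B ⊗ Aᵀ` into `A * B`, so, in Frobenius norms,
`N ‖Λ^η_{k,l}‖² = ‖∑ᵢ μᵢ A^η_{l,i} B^η_{k,i}‖²`. The unitarity relations give
`∑ ‖Λ^η_{k,l}‖² = N²`, while the triangle inequality, submultiplicativity of the Frobenius norm and
a weighted Cauchy–Schwarz inequality bound the right-hand sides in total by `(∑ μᵢ)² N²`.
Hence `N³ ≤ (∑ μᵢ)² N²`.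
-/

open Matrix Kronecker ComplexOrder

open scoped Matrix.Norms.Frobenius

namespace Matrix

variable {ι l m n p 𝕜 : Type*} [RCLike 𝕜]

theorem mul_mul_conjTranspose_apply_self [Fintype n] (X : Matrix m n 𝕜) (R : Matrix n n 𝕜)
    (i : m) : (X * R * Xᴴ) i i = star (star (X i)) ⬝ᵥ R *ᵥ star (X i) := by
  simp only [mul_apply, conjTranspose_apply, star_star, dotProduct, mulVec, Pi.star_apply,
    Finset.sum_mul, Finset.mul_sum, mul_assoc]
  exact Finset.sum_comm

theorem PosDef.eq_zero_of_mul_mul_conjTranspose_eq_zero [Fintype n] {R : Matrix n n 𝕜}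
    (hR : R.PosDef) {X : Matrix m n 𝕜} (h : X * R * Xᴴ = 0) : X = 0 := by
  ext i j
  have hrow : star (X i) = 0 := by
    by_contra hne
    have hpos := hR.dotProduct_mulVec_pos hne
    rw [← mul_mul_conjTranspose_apply_self, h] at hpos
    exact hpos.ne rfl
  simpa using congrFun hrow j

open scoped MatrixOrder in
theorem PosDef.eq_zero_of_sum_mul_mul_conjTranspose_eq_zero [Fintype ι] [Fintype m] [Fintype n]
    {R : Matrix n n 𝕜} (hR : R.PosDef) {X : ι → Matrix m n 𝕜}
    (h : ∑ j, X j * R * (X j)ᴴ = 0) (j : ι) : X j = 0 := by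
  have hterm := (Finset.sum_eq_zero_iff_of_nonneg fun j _ =>
    (hR.posSemidef.mul_mul_conjTranspose_same (X j)).nonneg).mp h j (Finset.mem_univ j)
  exact hR.eq_zero_of_mul_mul_conjTranspose_eq_zero hterm

theorem PosDef.mul_eq_self_of_sum_mul_mul_conjTranspose_eq [Fintype ι] [Fintype m] [Fintype n]
    [DecidableEq m] {R : Matrix n n 𝕜} (hR : R.PosDef) {E : Matrix m m 𝕜} (hE : E * E = E)
    {X : ι → Matrix m n 𝕜} (h : ∑ j, X j * R * (X j)ᴴ = E) (j : ι) : E * X j = X j := by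
  have hcompl : (1 - E) * E = 0 := by rw [sub_mul, one_mul, hE, sub_self]
  have hzero : ∑ j, ((1 - E) * X j) * R * ((1 - E) * X j)ᴴ = 0 := calc
    _ = (1 - E) * (∑ j, X j * R * (X j)ᴴ) * (1 - E)ᴴ := by
      simp only [conjTranspose_mul, Matrix.mul_assoc, Finset.mul_sum, Finset.sum_mul]
    _ = 0 := by rw [h, hcompl, Matrix.zero_mul]
  have := hR.eq_zero_of_sum_mul_mul_conjTranspose_eq_zero hzero j
  rwa [Matrix.sub_mul, Matrix.one_mul, sub_eq_zero, eq_comm] at this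

theorem star_dotProduct_self_eq_sum_norm_sq [Fintype n] (v : n → 𝕜) :
    star v ⬝ᵥ v = ((∑ i, ‖v i‖ ^ 2 : ℝ) : 𝕜) := by
  simp [dotProduct, RCLike.conj_mul]

theorem frobenius_norm_sq_eq_sum [Fintype m] [Fintype n] (A : Matrix m n 𝕜) :
    ‖A‖ ^ 2 = ∑ i, ∑ j, ‖A i j‖ ^ 2 := by
  rw [frobenius_norm_def, ← Real.sqrt_eq_rpow, Real.sq_sqrt (by positivity)]
  simp

theorem frobenius_norm_sq_eq_sum_vec [Fintype m] [Fintype n] (A : Matrix m n 𝕜) :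
    ‖A‖ ^ 2 = ∑ q, ‖vec A q‖ ^ 2 := by
  rw [frobenius_norm_sq_eq_sum, Fintype.sum_prod_type, Finset.sum_comm]
  rfl

theorem ofReal_frobenius_norm_sq [Fintype m] [Fintype n] (A : Matrix m n 𝕜) :
    ((‖A‖ ^ 2 : ℝ) : 𝕜) = (Aᴴ * A).trace := by
  rw [← star_vec_dotProduct_vec, star_dotProduct_self_eq_sum_norm_sq, frobenius_norm_sq_eq_sum_vec]

theorem frobenius_norm_sq_one [Fintype n] [DecidableEq n] :
    ‖(1 : Matrix n n 𝕜)‖ ^ 2 = Fintype.card n := by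
  simp [frobenius_norm_sq_eq_sum, one_apply, apply_ite]

theorem frobenius_norm_sq_vecMulVec [Fintype m] [Fintype n] (u : m → 𝕜) (v : n → 𝕜) :
    ‖vecMulVec u v‖ ^ 2 = (∑ i, ‖u i‖ ^ 2) * ∑ j, ‖v j‖ ^ 2 := by
  simp only [frobenius_norm_sq_eq_sum, vecMulVec_apply, norm_mul, mul_pow, Finset.sum_mul_sum]

theorem frobenius_norm_sq_eq_of_vecMulVec_mul_eq [Fintype m] [Fintype n] {ψ : m → 𝕜}
    (hψ : ∑ i, ‖ψ i‖ ^ 2 = 1) {X : Matrix m n 𝕜} (hX : vecMulVec ψ (star ψ) * X = X) :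
    ‖X‖ ^ 2 = ∑ q, ‖(star ψ ᵥ* X) q‖ ^ 2 := by
  rw [← hX, vecMulVec_mul, frobenius_norm_sq_vecMulVec, hψ, one_mul, ← vecMulVec_mul, hX]

theorem frobenius_norm_sum_smul_mul_le [Fintype ι] [Fintype l] [Fintype m] [Fintype n]
    {μ : ι → ℝ} (hμ : ∀ i, 0 ≤ μ i) (X : ι → Matrix m n 𝕜) (Y : ι → Matrix l m 𝕜) :
    ‖∑ i, (μ i : 𝕜) • (Y i * X i)‖ ≤ ∑ i, μ i * (‖Y i‖ * ‖X i‖) := by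
  refine (norm_sum_le _ _).trans (Finset.sum_le_sum fun i _ => ?_)
  rw [norm_smul, RCLike.norm_ofReal, abs_of_nonneg (hμ i)]
  exact mul_le_mul_of_nonneg_left (frobenius_norm_mul _ _) (hμ i)

theorem sum_frobenius_norm_sq_eq_card [Fintype ι] [Fintype m] [Fintype n] [DecidableEq n]
    {X : ι → Matrix m n 𝕜} (h : ∑ j, (X j)ᴴ * X j = 1) :
    ∑ j, ‖X j‖ ^ 2 = Fintype.card n := by
  apply RCLike.ofReal_injective (K := 𝕜)
  rw [RCLike.ofReal_sum]
  simp only [ofReal_frobenius_norm_sq, ← trace_sum, h, trace_one, RCLike.ofReal_natCast]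

theorem sum_sum_frobenius_norm_sq_eq_card {κ : Type*} [Fintype κ] [Fintype ι] [Fintype m]
    [Fintype n] [DecidableEq n] {X : κ → ι → Matrix m n 𝕜}
    (h : ∑ η, ∑ l, (X η l)ᴴ * X η l = 1) : ∑ η, ∑ l, ‖X η l‖ ^ 2 = Fintype.card n := by
  simpa only [Fintype.sum_prod_type] using
    sum_frobenius_norm_sq_eq_card (X := fun x : κ × ι => X x.1 x.2)
      (by simpa only [Fintype.sum_prod_type] using h)

theorem trace_conjTranspose_sum_smul_mul_sum_smul [Fintype ι] [Fintype m] [Fintype n]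
    (c : ι → ℝ) (Z : ι → Matrix m n 𝕜) :
    ((∑ i, (c i : 𝕜) • Z i)ᴴ * ∑ j, (c j : 𝕜) • Z j).trace
      = ∑ i, ∑ j, (c i * c j : 𝕜) * ((Z i)ᴴ * Z j).trace := by
  simp only [conjTranspose_sum, conjTranspose_smul, RCLike.star_def, RCLike.conj_ofReal,
    Matrix.sum_mul, Matrix.mul_sum, trace_sum, Matrix.smul_mul, Matrix.mul_smul, trace_smul,
    smul_eq_mul, Finset.mul_sum]
  conv_lhs => rw [Finset.sum_comm]
  exact Finset.sum_congr rfl fun i _ => Finset.sum_congr rfl fun j _ => by ring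

theorem trace_conjTranspose_kronecker_mul_kronecker [Fintype l] [Fintype m] [Fintype n]
    [Fintype p] (X X' : Matrix l m 𝕜) (Y Y' : Matrix n p 𝕜) :
    ((X ⊗ₖ Yᵀ)ᴴ * (X' ⊗ₖ Y'ᵀ)).trace = (Xᴴ * X').trace * (Yᴴ * Y').trace := by
  rw [conjTranspose_kronecker, ← mul_kronecker_mul, trace_kronecker,
    conjTranspose_transpose_eq_transpose_conjTranspose, ← transpose_mul, trace_transpose,
    trace_mul_comm Y']

theorem vec_one_vecMul_kronecker_transpose [Fintype n] [DecidableEq n] (X : Matrix n m 𝕜)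
    (Y : Matrix l n 𝕜) : vec 1 ᵥ* (X ⊗ₖ Yᵀ) = vec (Y * X) := by
  rw [vec_vecMul_kronecker, transpose_transpose, Matrix.mul_one]

theorem vec_one_vecMul_sum_smul_kronecker_transpose [Fintype ι] [Fintype n] [DecidableEq n]
    (c : ι → 𝕜) (X : ι → Matrix n m 𝕜) (Y : ι → Matrix l n 𝕜) :
    vec 1 ᵥ* ∑ i, c i • (X i ⊗ₖ (Y i)ᵀ) = vec (∑ i, c i • (Y i * X i)) := by
  simp only [vecMul_sum, vecMul_smul, vec_one_vecMul_kronecker_transpose, vec_sum, vec_smul]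

end Matrix

theorem sq_sum_mul_le_sum_mul_sum_mul_sq {ι : Type*} [Fintype ι] {μ : ι → ℝ}
    (hμ : ∀ i, 0 ≤ μ i) (x : ι → ℝ) :
    (∑ i, μ i * x i) ^ 2 ≤ (∑ i, μ i) * ∑ i, μ i * x i ^ 2 :=
  Finset.sum_sq_le_sum_mul_sum_of_sq_le_mul _ (fun i _ => hμ i)
    (fun i _ => mul_nonneg (hμ i) (sq_nonneg _)) fun i _ => le_of_eq (by ring)

theorem sum_sq_sum_mul_mul_le {κ ι : Type*} [Fintype κ] [Fintype ι] {μ : ι → ℝ}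
    (hμ : ∀ i, 0 ≤ μ i) (a b : κ → ι → ι → ℝ) {c d : ℝ}
    (ha : ∀ i, ∑ η, ∑ l, a η l i ^ 2 = c) (hb : ∀ η i, ∑ k, b η k i ^ 2 = d) :
    ∑ η, ∑ k, ∑ l, (∑ i, μ i * (a η l i * b η k i)) ^ 2 ≤ (∑ i, μ i) ^ 2 * (c * d) := by
  have hprod : ∀ i, ∑ η, ∑ k, ∑ l, (a η l i * b η k i) ^ 2 = c * d := fun i => calc
    _ = ∑ η, (∑ k, b η k i ^ 2) * ∑ l, a η l i ^ 2 := Finset.sum_congr rfl fun η _ => by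
      rw [Finset.sum_mul_sum]
      exact Finset.sum_congr rfl fun k _ => Finset.sum_congr rfl fun l _ => by ring
    _ = c * d := by simp only [hb, ← Finset.mul_sum, ha, mul_comm]
  calc _ ≤ ∑ η, ∑ k, ∑ l, (∑ i, μ i) * ∑ i, μ i * (a η l i * b η k i) ^ 2 := by
        gcongr with η _ k _ l _
        exact sq_sum_mul_le_sum_mul_sum_mul_sq hμ _
    _ = (∑ i, μ i) * ∑ i, μ i * ∑ η, ∑ k, ∑ l, (a η l i * b η k i) ^ 2 := by
        simp only [Finset.mul_sum]
        symm
        rw [Finset.sum_comm]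
        refine Finset.sum_congr rfl fun η _ => ?_
        rw [Finset.sum_comm]
        exact Finset.sum_congr rfl fun k _ => Finset.sum_comm
    _ = (∑ i, μ i) ^ 2 * (c * d) := by
        simp only [hprod, ← Finset.sum_mul]
        ring

section MaxEntangled

variable (n : Type*) [Fintype n] [DecidableEq n]

/-- `vec 1 = ∑ₑ |e e⟩`, so this is the normalized maximally entangled vector. -/
noncomputable def maxEntangled : n × n → ℂ :=
  ((Real.sqrt (Fintype.card n) : ℂ))⁻¹ • vec 1

theorem sum_norm_sq_maxEntangled [Nonempty n] : ∑ q, ‖maxEntangled n q‖ ^ 2 = 1 := by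
  have hcard : (0 : ℝ) < Fintype.card n := by exact_mod_cast Fintype.card_pos
  simp only [maxEntangled, Pi.smul_apply, smul_eq_mul, norm_mul, norm_inv, mul_pow,
    ← Finset.mul_sum, ← frobenius_norm_sq_eq_sum_vec]
  rw [frobenius_norm_sq_one, Complex.norm_real, Real.norm_of_nonneg (Real.sqrt_nonneg _), inv_pow,
    Real.sq_sqrt hcard.le, inv_mul_cancel₀ hcard.ne']

theorem maxEntangled_projection_mul_self [Nonempty n] :
    vecMulVec (maxEntangled n) (star (maxEntangled n)) *
        vecMulVec (maxEntangled n) (star (maxEntangled n)) =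
      vecMulVec (maxEntangled n) (star (maxEntangled n)) := by
  rw [vecMulVec_mul_vecMulVec, star_dotProduct_self_eq_sum_norm_sq, sum_norm_sq_maxEntangled,
    RCLike.ofReal_one, one_smul]

theorem card_mul_frobenius_norm_sq_eq_of_maxEntangled_projection_mul_eq [Nonempty n]
    {m : Type*} [Fintype m] {X : Matrix (n × n) m ℂ}
    (hX : vecMulVec (maxEntangled n) (star (maxEntangled n)) * X = X) :
    Fintype.card n * ‖X‖ ^ 2 = ∑ q, ‖(vec 1 ᵥ* X) q‖ ^ 2 := by
  have hcard : (0 : ℝ) < Fintype.card n := by exact_mod_cast Fintype.card_pos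
  have hstar : star (maxEntangled n) = maxEntangled n := by
    simp [maxEntangled, star_vec]
  rw [frobenius_norm_sq_eq_of_vecMulVec_mul_eq (sum_norm_sq_maxEntangled n) hX, hstar]
  simp only [maxEntangled, smul_vecMul, Pi.smul_apply, smul_eq_mul, norm_mul, norm_inv, mul_pow,
    ← Finset.mul_sum, Complex.norm_real, Real.norm_of_nonneg (Real.sqrt_nonneg _), inv_pow,
    Real.sq_sqrt hcard.le, mul_inv_cancel_left₀ hcard.ne']

end MaxEntangled

section UnitaryFamilies

variable {κ ι l m n p 𝕜 : Type*} [Fintype κ] [Fintype ι] [Fintype l] [Fintype m] [DecidableEq m]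
  [Fintype n] [Fintype p] [RCLike 𝕜]

theorem sum_frobenius_norm_sq_sum_smul_kronecker [DecidableEq ι] (μ : ι → ℝ)
    {B : ι → ι → Matrix l m 𝕜}
    (hB : ∀ i j, ∑ k, (B k i)ᴴ * B k j = if i = j then 1 else 0) (A : ι → Matrix n p 𝕜) :
    ∑ k, ‖∑ i, (μ i : 𝕜) • (B k i ⊗ₖ (A i)ᵀ)‖ ^ 2
      = Fintype.card m * ∑ i, μ i ^ 2 * ‖A i‖ ^ 2 := by
  have hBtr : ∀ i j, ∑ k, ((B k i)ᴴ * B k j).trace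
      = if i = j then (Fintype.card m : 𝕜) else 0 := by
    intro i j
    rw [← trace_sum, hB]
    split_ifs <;> simp
  apply RCLike.ofReal_injective (K := 𝕜)
  calc ((∑ k, ‖∑ i, (μ i : 𝕜) • (B k i ⊗ₖ (A i)ᵀ)‖ ^ 2 : ℝ) : 𝕜)
      = ∑ i, ∑ j, (μ i * μ j : 𝕜) * (∑ k, ((B k i)ᴴ * B k j).trace) * ((A i)ᴴ * A j).trace := by
        simp only [RCLike.ofReal_sum, ofReal_frobenius_norm_sq,
          trace_conjTranspose_sum_smul_mul_sum_smul, trace_conjTranspose_kronecker_mul_kronecker,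
          Finset.mul_sum, Finset.sum_mul]
        rw [Finset.sum_comm]
        refine Finset.sum_congr rfl fun i _ => ?_
        rw [Finset.sum_comm]
        exact Finset.sum_congr rfl fun j _ => Finset.sum_congr rfl fun k _ => by ring
    _ = ∑ i, (μ i ^ 2 : 𝕜) * Fintype.card m * ((A i)ᴴ * A i).trace := by
        simp only [hBtr, mul_ite, ite_mul, mul_zero, zero_mul, Finset.sum_ite_eq, Finset.mem_univ,
          if_true, sq]
    _ = _ := by
        simp only [← ofReal_frobenius_norm_sq]
        push_cast
        simp only [Finset.mul_sum]
        exact Finset.sum_congr rfl fun i _ => by ring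

theorem sum_frobenius_norm_sq_sum_smul_kronecker_eq_card_mul_card [DecidableEq ι] [DecidableEq p]
    {μ : ι → ℝ} (hμ : ∑ i, μ i ^ 2 = 1)
    {A : κ → ι → ι → Matrix n p 𝕜} {B : κ → ι → ι → Matrix l m 𝕜}
    (hA : ∀ i, ∑ η, ∑ k, (A η k i)ᴴ * A η k i = 1)
    (hB : ∀ η i j, ∑ k, (B η k i)ᴴ * B η k j = if i = j then 1 else 0) :
    ∑ η, ∑ k, ∑ l, ‖∑ i, (μ i : 𝕜) • (B η k i ⊗ₖ (A η l i)ᵀ)‖ ^ 2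
      = Fintype.card m * Fintype.card p := by
  calc _ = ∑ η, ∑ l, ∑ k, ‖∑ i, (μ i : 𝕜) • (B η k i ⊗ₖ (A η l i)ᵀ)‖ ^ 2 :=
        Finset.sum_congr rfl fun η _ => Finset.sum_comm
    _ = Fintype.card m * ∑ i, μ i ^ 2 * ∑ η, ∑ l, ‖A η l i‖ ^ 2 := by
        simp only [sum_frobenius_norm_sq_sum_smul_kronecker μ (hB _), ← Finset.mul_sum]
        congr 1
        simp only [Finset.mul_sum]
        symm
        rw [Finset.sum_comm]
        exact Finset.sum_congr rfl fun η _ => Finset.sum_comm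
    _ = _ := by
        simp only [sum_sum_frobenius_norm_sq_eq_card (hA _), ← Finset.sum_mul, hμ, one_mul]

theorem sum_frobenius_norm_sq_sum_smul_mul_le [DecidableEq p] {μ : ι → ℝ} (hμ : ∀ i, 0 ≤ μ i)
    {A : κ → ι → ι → Matrix n p 𝕜} {B : κ → ι → ι → Matrix p m 𝕜}
    (hA : ∀ i, ∑ η, ∑ k, (A η k i)ᴴ * A η k i = 1) (hB : ∀ η i, ∑ k, (B η k i)ᴴ * B η k i = 1) :
    ∑ η, ∑ k, ∑ l, ‖∑ i, (μ i : 𝕜) • (A η l i * B η k i)‖ ^ 2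
      ≤ (∑ i, μ i) ^ 2 * (Fintype.card p * Fintype.card m) := calc
  _ ≤ ∑ η, ∑ k, ∑ l, (∑ i, μ i * (‖A η l i‖ * ‖B η k i‖)) ^ 2 := by
    gcongr with η _ k _ l _
    exact frobenius_norm_sum_smul_mul_le hμ _ _
  _ ≤ _ := sum_sq_sum_mul_mul_le hμ _ _ (fun i => sum_sum_frobenius_norm_sq_eq_card (hA i))
    (fun η i => sum_frobenius_norm_sq_eq_card (hB η i))

end UnitaryFamilies

theorem schmidt_sum_lower_bound_general
    (N M P : ℕ) (hN : 2 ≤ N)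
    (μ : Fin P → ℝ) (hμ : ∀ i, 0 ≤ μ i) (hμsum : ∑ i, μ i ^ 2 = 1)
    (A B : Fin M → Fin P → Fin P → Matrix (Fin N) (Fin N) ℂ)
    (hA2 : ∀ i j : Fin P, ∑ η : Fin M, ∑ k : Fin P, (A η k i)ᴴ * A η k j
        = if i = j then (1 : Matrix (Fin N) (Fin N) ℂ) else 0)
    (hB2 : ∀ (η : Fin M) (i j : Fin P), ∑ k : Fin P, (B η k i)ᴴ * B η k j
        = if i = j then (1 : Matrix (Fin N) (Fin N) ℂ) else 0)
    (Λ : Fin M → Fin P → Fin P → Matrix (Fin N × Fin N) (Fin N × Fin N) ℂ)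
    (hΛ : ∀ η k l, Λ η k l = ∑ i : Fin P, ((μ i : ℂ)) • (B η k i ⊗ₖ (A η l i)ᵀ))
    (ψ₀ : Fin N × Fin N → ℂ)
    (hψ₀ : ∀ q : Fin N × Fin N, ψ₀ q = if q.1 = q.2 then (1 / (Real.sqrt N : ℂ)) else 0)
    (Ψ₀ : Matrix (Fin N × Fin N) (Fin N × Fin N) ℂ)
    (hΨ₀ : ∀ q q' : Fin N × Fin N, Ψ₀ q q' = ψ₀ q * (starRingEnd ℂ) (ψ₀ q'))
    (R : Matrix (Fin N × Fin N) (Fin N × Fin N) ℂ)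
    (hR : R.PosDef)
    (hcorr : ∑ η : Fin M, ∑ k : Fin P, ∑ l : Fin P, Λ η k l * R * (Λ η k l)ᴴ = Ψ₀) :
    Real.sqrt N ≤ ∑ i, μ i := by
  have : NeZero N := ⟨by omega⟩
  have hA : ∀ i, ∑ η, ∑ k, (A η k i)ᴴ * A η k i = 1 := fun i => by simpa using hA2 i i
  have hB : ∀ η i, ∑ k, (B η k i)ᴴ * B η k i = 1 := fun η i => by simpa using hB2 η i i
  have hΨ : Ψ₀ = vecMulVec (maxEntangled (Fin N)) (star (maxEntangled (Fin N))) := by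
    have hψ : ψ₀ = maxEntangled (Fin N) := funext fun q => by
      simp [hψ₀, maxEntangled, vec, one_apply, eq_comm]
    ext q q'
    simp [hΨ₀, hψ, vecMulVec_apply]
  have hsupp : ∀ η k l, Ψ₀ * Λ η k l = Λ η k l := fun η k l =>
    hR.mul_eq_self_of_sum_mul_mul_conjTranspose_eq (hΨ ▸ maxEntangled_projection_mul_self _)
      (X := fun x : Fin M × Fin P × Fin P => Λ x.1 x.2.1 x.2.2)
      (by simpa only [Fintype.sum_prod_type] using hcorr) (η, k, l)
  have hcontract : ∀ η k l,
      (N : ℝ) * ‖Λ η k l‖ ^ 2 = ‖∑ i, (μ i : ℂ) • (A η l i * B η k i)‖ ^ 2 := fun η k l => by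
    have := card_mul_frobenius_norm_sq_eq_of_maxEntangled_projection_mul_eq (Fin N)
      (hΨ ▸ hsupp η k l)
    rw [Fintype.card_fin] at this
    rw [this, hΛ, vec_one_vecMul_sum_smul_kronecker_transpose, frobenius_norm_sq_eq_sum_vec]
  have htotal : ∑ η, ∑ k, ∑ l, ‖Λ η k l‖ ^ 2 = (N : ℝ) ^ 2 := by
    simpa [hΛ, sq] using
      sum_frobenius_norm_sq_sum_smul_kronecker_eq_card_mul_card (𝕜 := ℂ) hμsum hA hB2
  have hbound : ∑ η, ∑ k, ∑ l, ‖∑ i, (μ i : ℂ) • (A η l i * B η k i)‖ ^ 2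
      ≤ (∑ i, μ i) ^ 2 * (N * N) := by
    simpa using sum_frobenius_norm_sq_sum_smul_mul_le hμ hA hB
  have hN2 : (N : ℝ) ≤ (∑ i, μ i) ^ 2 := by
    simp only [← hcontract, ← Finset.mul_sum, htotal, ← sq] at hbound
    exact le_of_mul_le_mul_right hbound (by positivity)
  simpa [Real.sqrt_sq (Finset.sum_nonneg fun i _ => hμ i)] using Real.sqrt_le_sqrt hN2

/-- If a protocol deterministically and faithfully corrects a maximal-rank channel,
then the Schmidt coefficients of the pre-shared state satisfy `∑ i, μ i ≥ √N`. -/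
theorem schmidt_sum_lower_bound
    (N M P : ℕ) (hN : 2 ≤ N) (hM : 1 ≤ M) (hP : 1 ≤ P)
    (μ : Fin P → ℝ) (hμ : ∀ i, 0 ≤ μ i) (hμsum : ∑ i, μ i ^ 2 = 1)
    (A B : Fin M → Fin P → Fin P → Matrix (Fin N) (Fin N) ℂ)
    (hA1 : ∀ i j : Fin P, ∑ η : Fin M, ∑ k : Fin P, A η i k * (A η j k)ᴴ
        = if i = j then (1 : Matrix (Fin N) (Fin N) ℂ) else 0)
    (hA2 : ∀ i j : Fin P, ∑ η : Fin M, ∑ k : Fin P, (A η k i)ᴴ * A η k j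
        = if i = j then (1 : Matrix (Fin N) (Fin N) ℂ) else 0)
    (hB1 : ∀ (η : Fin M) (i j : Fin P), ∑ k : Fin P, B η i k * (B η j k)ᴴ
        = if i = j then (1 : Matrix (Fin N) (Fin N) ℂ) else 0)
    (hB2 : ∀ (η : Fin M) (i j : Fin P), ∑ k : Fin P, (B η k i)ᴴ * B η k j
        = if i = j then (1 : Matrix (Fin N) (Fin N) ℂ) else 0)
    (Λ : Fin M → Fin P → Fin P → Matrix (Fin N × Fin N) (Fin N × Fin N) ℂ)
    (hΛ : ∀ η k l, Λ η k l = ∑ i : Fin P, ((μ i : ℂ)) • (B η k i ⊗ₖ (A η l i)ᵀ))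
    (ψ₀ : Fin N × Fin N → ℂ)
    (hψ₀ : ∀ q : Fin N × Fin N, ψ₀ q = if q.1 = q.2 then (1 / (Real.sqrt N : ℂ)) else 0)
    (Ψ₀ : Matrix (Fin N × Fin N) (Fin N × Fin N) ℂ)
    (hΨ₀ : ∀ q q' : Fin N × Fin N, Ψ₀ q q' = ψ₀ q * (starRingEnd ℂ) (ψ₀ q'))
    (R : Matrix (Fin N × Fin N) (Fin N × Fin N) ℂ)
    (hR : R.PosDef) (hRtr : R.trace = 1)
    (hcorr : ∑ η : Fin M, ∑ k : Fin P, ∑ l : Fin P, Λ η k l * R * (Λ η k l)ᴴ = Ψ₀) :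
    Real.sqrt N ≤ ∑ i, μ i :=
  schmidt_sum_lower_bound_general N M P hN μ hμ hμsum A B hA2 hB2 Λ hΛ ψ₀ hψ₀ Ψ₀ hΨ₀ R hR hcorr
end

section
/- Under the protocol data below, if the protocol corrects the channel faithfully and deterministically, i.e. Σ_{η∈Fin M} Σ_{k,l∈Fin P} Λ^η_{k,l} R (Λ^η_{k,l})† = Ψ₀ for the given positive-definite Choi state R, then P ≥ N: the Schmidt rank of the pre-shared entangled state is at least the dimension N of the transmitted system. -/
/-!
Positivity forces every `Λ` to map into the line spanned by `ψ₀`: for `x ⊥ ψ₀`,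
`0 = x† Ψ₀ x = Σ ⟨Λ† x, R Λ† x⟩`, a sum of nonnegative terms, and `R` is positive definite.
Since `Ψ₀ ≠ 0`, some column of some `Λ` is a nonzero multiple of `ψ₀`. Under vectorization
`ψ₀` is `1/√N` times the identity matrix, of rank `N`, whereas that column is `Λ` applied to a
product vector, i.e. the vectorization of a sum of `P` matrices of rank at most one.
-/

open Matrix Kronecker ComplexOrder

namespace Matrix

section Rank

variable {m n K : Type*} [Fintype n] [Field K]

theorem rank_add_le (A B : Matrix m n K) : (A + B).rank ≤ A.rank + B.rank := by
  rw [rank, rank, rank, mulVecLin_add]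
  refine (Submodule.finrank_mono ?_).trans (Submodule.finrank_add_le_finrank_add_finrank _ _)
  rintro _ ⟨x, rfl⟩
  exact Submodule.add_mem_sup (LinearMap.mem_range_self _ x) (LinearMap.mem_range_self _ x)

theorem rank_sum_le {ι : Type*} (s : Finset ι) (A : ι → Matrix m n K) :
    (∑ i ∈ s, A i).rank ≤ ∑ i ∈ s, (A i).rank := by
  classical
  induction s using Finset.induction_on with
  | empty => simp
  | insert i s hi ih =>
    rw [Finset.sum_insert hi, Finset.sum_insert hi]
    exact (rank_add_le _ _).trans (by gcongr)

theorem rank_sum_mul_mul_le {l p ι : Type*} [Fintype l] [Fintype p] (s : Finset ι)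
    (A : ι → Matrix m l K) (X : Matrix l p K) (B : ι → Matrix p n K) :
    (∑ i ∈ s, A i * X * B i).rank ≤ s.card * X.rank := by
  calc (∑ i ∈ s, A i * X * B i).rank ≤ ∑ i ∈ s, (A i * X * B i).rank := rank_sum_le _ _
    _ ≤ ∑ _i ∈ s, X.rank := Finset.sum_le_sum fun i _ =>
        (rank_mul_le_left _ _).trans (rank_mul_le_right _ _)
    _ = s.card * X.rank := by rw [Finset.sum_const, smul_eq_mul]

end Rank

section Kronecker

variable {m n p K : Type*} [Fintype m] [Fintype p] [Field K]

theorem sum_smul_kronecker_mulVec_vec {ι : Type*} (s : Finset ι) (c : ι → K)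
    (B : ι → Matrix n p K) (A : ι → Matrix n m K) (X : Matrix m p K) :
    (∑ i ∈ s, c i • (B i ⊗ₖ A i)) *ᵥ vec X = vec (∑ i ∈ s, (c i • A i) * X * (B i)ᵀ) := by
  simp only [sum_mulVec, smul_mulVec, kronecker_mulVec_vec, smul_mul, vec_sum, vec_smul]

theorem card_le_of_sum_smul_kronecker_mulVec_eq_smul_vec_one [Fintype n] [DecidableEq n]
    {ι : Type*} [Fintype ι] (c : ι → K) (B : ι → Matrix n p K) (A : ι → Matrix n m K)
    {X : Matrix m p K} (hX : X.rank ≤ 1) {z : K} (hz : z ≠ 0)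
    (h : (∑ i, c i • (B i ⊗ₖ A i)) *ᵥ vec X = z • vec 1) :
    Fintype.card n ≤ Fintype.card ι := by
  rw [sum_smul_kronecker_mulVec_vec, ← vec_smul, vec_inj] at h
  calc Fintype.card n = (z • (1 : Matrix n n K)).rank := by
        rw [rank_of_isUnit _ ((isUnit_iff_isUnit_det _).mpr (by simp [hz]))]
    _ = _ := by rw [← h]
    _ ≤ Fintype.card ι * X.rank := rank_sum_mul_mul_le _ _ _ _
    _ ≤ Fintype.card ι := by simpa using Nat.mul_le_mul_left _ hX

end Kronecker

section PosDef

variable {m n ι 𝕜 : Type*} [Fintype m] [Fintype n] [Fintype ι] [RCLike 𝕜]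

theorem PosDef.conjTranspose_mulVec_eq_zero_of_sum_mulVec_eq_zero {R : Matrix n n 𝕜}
    (hR : R.PosDef) (L : ι → Matrix m n 𝕜) {x : m → 𝕜}
    (hx : (∑ j, L j * R * (L j)ᴴ) *ᵥ x = 0) (j : ι) : (L j)ᴴ *ᵥ x = 0 := by
  have hform : ∀ j, star x ⬝ᵥ ((L j * R * (L j)ᴴ) *ᵥ x)
      = star ((L j)ᴴ *ᵥ x) ⬝ᵥ (R *ᵥ ((L j)ᴴ *ᵥ x)) := fun j => by
    rw [← mulVec_mulVec, ← mulVec_mulVec, dotProduct_mulVec, star_mulVec,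
      conjTranspose_conjTranspose]
  have hsum : ∑ j, star x ⬝ᵥ ((L j * R * (L j)ᴴ) *ᵥ x) = 0 := by
    rw [← dotProduct_sum, ← sum_mulVec, hx, dotProduct_zero]
  have hnonneg : ∀ j, 0 ≤ star x ⬝ᵥ ((L j * R * (L j)ᴴ) *ᵥ x) := fun j =>
    (hR.posSemidef.mul_mul_conjTranspose_same (L j)).dotProduct_mulVec_nonneg x
  have hj := (Finset.sum_eq_zero_iff_of_nonneg fun j _ => hnonneg j).mp hsum j (Finset.mem_univ j)
  by_contra hne
  exact (hR.dotProduct_mulVec_pos hne).ne' (by rw [← hform, hj])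

theorem PosDef.mul_eq_of_sum_mul_mul_conjTranspose_eq [DecidableEq m] {R : Matrix n n 𝕜}
    (hR : R.PosDef) (L : ι → Matrix m n 𝕜) {E : Matrix m m 𝕜} (hE : E.IsHermitian)
    (hEE : IsIdempotentElem E) (h : ∑ j, L j * R * (L j)ᴴ = E) (j : ι) : E * L j = L j := by
  have hker : (L j)ᴴ * (1 - E) = 0 := by
    refine ext_iff_mulVec.mpr fun v => ?_
    rw [← mulVec_mulVec, zero_mulVec]
    refine hR.conjTranspose_mulVec_eq_zero_of_sum_mulVec_eq_zero L ?_ j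
    rw [h, mulVec_mulVec, Matrix.mul_sub, Matrix.mul_one, hEE.eq, sub_self, zero_mulVec]
  have := congrArg (·ᴴ) hker
  rw [conjTranspose_mul, conjTranspose_conjTranspose, conjTranspose_sub, conjTranspose_one, hE.eq,
    conjTranspose_zero, Matrix.sub_mul, Matrix.one_mul, sub_eq_zero] at this
  exact this.symm

variable [DecidableEq m] {R : Matrix n n 𝕜} {ψ : m → 𝕜}

theorem PosDef.mulVec_eq_smul_of_sum_eq_vecMulVec (hR : R.PosDef) (L : ι → Matrix m n 𝕜)
    (hψ : star ψ ⬝ᵥ ψ = 1) (h : ∑ j, L j * R * (L j)ᴴ = vecMulVec ψ (star ψ)) (j : ι)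
    (v : n → 𝕜) : L j *ᵥ v = (star ψ ⬝ᵥ (L j *ᵥ v)) • ψ := by
  have hE : (vecMulVec ψ (star ψ)).IsHermitian := by
    rw [IsHermitian, conjTranspose_vecMulVec, star_star]
  have hEE : IsIdempotentElem (vecMulVec ψ (star ψ)) := by
    rw [IsIdempotentElem, vecMulVec_mul_vecMulVec, hψ, one_smul]
  conv_lhs => rw [← hR.mul_eq_of_sum_mul_mul_conjTranspose_eq L hE hEE h j, ← mulVec_mulVec,
    vecMulVec_mulVec, op_smul_eq_smul]

theorem PosDef.exists_col_eq_smul_of_sum_eq_vecMulVec [DecidableEq n] (hR : R.PosDef)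
    (L : ι → Matrix m n 𝕜) (hψ : star ψ ⬝ᵥ ψ = 1)
    (h : ∑ j, L j * R * (L j)ᴴ = vecMulVec ψ (star ψ)) :
    ∃ j q, ∃ z : 𝕜, z ≠ 0 ∧ (L j).col q = z • ψ := by
  obtain ⟨j, hj⟩ : ∃ j, L j ≠ 0 := by
    by_contra! hL
    simp only [hL, Matrix.zero_mul, Finset.sum_const_zero] at h
    have hψ0 : vecMulVec ψ (star ψ) *ᵥ ψ = ψ := by
      rw [vecMulVec_mulVec, hψ, MulOpposite.op_one, one_smul]
    rw [← h, zero_mulVec] at hψ0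
    simp [← hψ0] at hψ
  obtain ⟨q, hq⟩ : ∃ q, (L j).col q ≠ 0 := by
    by_contra! hq
    exact hj (ext fun a q' => congrFun (hq q') a)
  have hcol := hR.mulVec_eq_smul_of_sum_eq_vecMulVec L hψ h j (Pi.single q 1)
  rw [mulVec_single_one] at hcol
  exact ⟨j, q, _, fun hz => hq (by rw [hcol, hz, zero_smul]), hcol⟩

end PosDef

end Matrix

theorem schmidt_rank_lower_bound_general
    (N M P : ℕ)
    (μ : Fin P → ℝ)
    (A B : Fin M → Fin P → Fin P → Matrix (Fin N) (Fin N) ℂ)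
    (Λ : Fin M → Fin P → Fin P → Matrix (Fin N × Fin N) (Fin N × Fin N) ℂ)
    (hΛ : ∀ η k l, Λ η k l = ∑ i : Fin P, ((μ i : ℂ)) • (B η k i ⊗ₖ (A η l i)ᵀ))
    (ψ₀ : Fin N × Fin N → ℂ)
    (hψ₀ : ∀ q : Fin N × Fin N, ψ₀ q = if q.1 = q.2 then (1 / (Real.sqrt N : ℂ)) else 0)
    (Ψ₀ : Matrix (Fin N × Fin N) (Fin N × Fin N) ℂ)
    (hΨ₀ : ∀ q q' : Fin N × Fin N, Ψ₀ q q' = ψ₀ q * (starRingEnd ℂ) (ψ₀ q'))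
    (R : Matrix (Fin N × Fin N) (Fin N × Fin N) ℂ)
    (hR : R.PosDef)
    (hcorr : ∑ η : Fin M, ∑ k : Fin P, ∑ l : Fin P, Λ η k l * R * (Λ η k l)ᴴ = Ψ₀) :
    N ≤ P := by
  obtain rfl | hNpos := N.eq_zero_or_pos
  · exact P.zero_le
  set s : ℂ := ((Real.sqrt N : ℝ) : ℂ)⁻¹ with hs
  have hψ : ψ₀ = s • vec 1 := by
    ext ⟨a, b⟩
    simp [hψ₀, one_apply, eq_comm, hs]
  have hunit : star ψ₀ ⬝ᵥ ψ₀ = 1 := by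
    have hsqrt : ((Real.sqrt N : ℝ) : ℂ) ^ 2 = N := by
      norm_cast; exact Real.sq_sqrt N.cast_nonneg
    have hsqrt0 : ((Real.sqrt N : ℝ) : ℂ) ≠ 0 := by simp [hNpos.ne']
    rw [hψ, star_smul, smul_dotProduct, dotProduct_smul, star_vec_dotProduct_vec]
    simp only [hs, star_inv₀, RCLike.star_def, Complex.conj_ofReal, conjTranspose_one, mul_one,
      trace_one, Fintype.card_fin, smul_eq_mul, ← hsqrt]
    field_simp
  rw [show Ψ₀ = vecMulVec ψ₀ (star ψ₀) from ext hΨ₀] at hcorr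
  simp only [← Fintype.sum_prod_type'] at hcorr
  obtain ⟨⟨η, k, l⟩, q, z, hz, hcol⟩ := hR.exists_col_eq_smul_of_sum_eq_vecMulVec _ hunit hcorr
  have hprod : (∑ i, (μ i : ℂ) • (B η k i ⊗ₖ (A η l i)ᵀ)) *ᵥ vec (single q.2 q.1 1)
      = (z * s) • vec 1 := by
    rw [vec_single, ← hΛ, mulVec_single_one, hcol, hψ, smul_smul]
  simpa using card_le_of_sum_smul_kronecker_mulVec_eq_smul_vec_one (fun i => (μ i : ℂ)) (B η k)
    (fun i => (A η l i)ᵀ) (by rw [single_eq_single_vecMulVec_single]; exact rank_vecMulVec_le _ _)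
    (mul_ne_zero hz (by simp [hs, hNpos.ne'])) hprod

/-- If a protocol deterministically and faithfully corrects a maximal-rank channel,
then the Schmidt rank `P` of the pre-shared entangled state is at least `N`. -/
theorem schmidt_rank_lower_bound
    (N M P : ℕ) (hN : 2 ≤ N) (hM : 1 ≤ M) (hP : 1 ≤ P)
    (μ : Fin P → ℝ) (hμ : ∀ i, 0 ≤ μ i) (hμsum : ∑ i, μ i ^ 2 = 1)
    (A B : Fin M → Fin P → Fin P → Matrix (Fin N) (Fin N) ℂ)
    (hA1 : ∀ i j : Fin P, ∑ η : Fin M, ∑ k : Fin P, A η i k * (A η j k)ᴴ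
        = if i = j then (1 : Matrix (Fin N) (Fin N) ℂ) else 0)
    (hA2 : ∀ i j : Fin P, ∑ η : Fin M, ∑ k : Fin P, (A η k i)ᴴ * A η k j
        = if i = j then (1 : Matrix (Fin N) (Fin N) ℂ) else 0)
    (hB1 : ∀ (η : Fin M) (i j : Fin P), ∑ k : Fin P, B η i k * (B η j k)ᴴ
        = if i = j then (1 : Matrix (Fin N) (Fin N) ℂ) else 0)
    (hB2 : ∀ (η : Fin M) (i j : Fin P), ∑ k : Fin P, (B η k i)ᴴ * B η k j
        = if i = j then (1 : Matrix (Fin N) (Fin N) ℂ) else 0)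
    (Λ : Fin M → Fin P → Fin P → Matrix (Fin N × Fin N) (Fin N × Fin N) ℂ)
    (hΛ : ∀ η k l, Λ η k l = ∑ i : Fin P, ((μ i : ℂ)) • (B η k i ⊗ₖ (A η l i)ᵀ))
    (ψ₀ : Fin N × Fin N → ℂ)
    (hψ₀ : ∀ q : Fin N × Fin N, ψ₀ q = if q.1 = q.2 then (1 / (Real.sqrt N : ℂ)) else 0)
    (Ψ₀ : Matrix (Fin N × Fin N) (Fin N × Fin N) ℂ)
    (hΨ₀ : ∀ q q' : Fin N × Fin N, Ψ₀ q q' = ψ₀ q * (starRingEnd ℂ) (ψ₀ q'))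
    (R : Matrix (Fin N × Fin N) (Fin N × Fin N) ℂ)
    (hR : R.PosDef) (hRtr : R.trace = 1)
    (hcorr : ∑ η : Fin M, ∑ k : Fin P, ∑ l : Fin P, Λ η k l * R * (Λ η k l)ᴴ = Ψ₀) :
    N ≤ P :=
  schmidt_rank_lower_bound_general N M P μ A B Λ hΛ ψ₀ hψ₀ Ψ₀ hΨ₀ R hR hcorr
end

section
/- Let N ≥ 2 and P ≥ 1, let μ : Fin P → ℝ satisfy μ_i ≥ 0 and Σ_{i∈Fin P} μ_i² = 1, and let A_{l,i} and B_{k,i} (k, l, i ∈ Fin P) be N×N complex matrices satisfying the completeness relations Σ_{k∈Fin P} A_{i,k}(A_{j,k})† = Σ_{k∈Fin P} (A_{k,i})† A_{k,j} = δ_{ij}·1_N and Σ_{k∈Fin P} B_{i,k}(B_{j,k})† = Σ_{k∈Fin P} (B_{k,i})† B_{k,j} = δ_{ij}·1_N for all i,j ∈ Fin P. Suppose there exists an injection e : Fin N → Fin P such that for all m, n ∈ Fin N and all k, l ∈ Fin P, the matrix element identity Σ_{i∈Fin P} μ_i · (A_{l,i} · B_{k,i})_{n,m} = √N · [k = e(m)]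 · [l = e(n)] holds. Then False: multiplying this identity by its complex conjugate, summing over n, k, l and using the completeness relations yields Σ_i μ_i² = N², contradicting Σ_i μ_i² = 1. -/
/-!
Set `K (k, l) := ∑ i, μ i • A l i * B k i`. The completeness relations make the block columns
`(A l i)_l` and `(B k i)_k` isometries, so `∑ (k, l), (K (k, l))ᴴ * K (k, l) = (∑ i, μ i ^ 2) • 1 = 1`.
Evaluating the `(m, m)` entry of this identity with the prescribed matrix elements
`K (k, l) n m = √N [k = e m] [l = e n]` instead gives `N ^ 2`, which is impossible for `N ≥ 2`.
-/

open Matrix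

variable {ι κ κ' n R : Type*} [Fintype κ] [Fintype n] [DecidableEq ι] [DecidableEq n]

theorem sum_conjTranspose_mul_mul_eq_ite [Fintype κ'] [CommSemiring R] [StarRing R]
    {A : κ' → ι → Matrix n n R} {B : κ → ι → Matrix n n R}
    (hA : ∀ i j, ∑ l, (A l i)ᴴ * A l j = if i = j then 1 else 0)
    (hB : ∀ i j, ∑ k, (B k i)ᴴ * B k j = if i = j then 1 else 0) (i j : ι) :
    ∑ p : κ × κ', (A p.2 i * B p.1 i)ᴴ * (A p.2 j * B p.1 j) = if i = j then 1 else 0 := by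
  have sum_over_A (k : κ) : ∑ l, (A l i * B k i)ᴴ * (A l j * B k j)
      = (B k i)ᴴ * ((if i = j then 1 else 0) * B k j) := by
    simp only [← hA i j, conjTranspose_mul, Finset.sum_mul, Finset.mul_sum, Matrix.mul_assoc]
  rw [Fintype.sum_prod_type]
  simp only [sum_over_A]
  split_ifs with hij
  · simpa [hij] using hB j j
  · simp

theorem sum_conjTranspose_mul_self_of_weighted_sum [Fintype ι] [CommSemiring R] [StarRing R]
    {C : κ → ι → Matrix n n R}
    (hC : ∀ i j, ∑ k, (C k i)ᴴ * C k j = if i = j then 1 else 0) (w : ι → R) :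
    ∑ k, (∑ i, w i • C k i)ᴴ * (∑ j, w j • C k j) = (∑ i, star (w i) * w i) • 1 := by
  calc ∑ k, (∑ i, w i • C k i)ᴴ * (∑ j, w j • C k j)
      = ∑ i, ∑ j, (star (w i) * w j) • ∑ k, (C k i)ᴴ * C k j := by
        simp only [conjTranspose_sum, conjTranspose_smul, Finset.sum_mul_sum, smul_mul_smul,
          Finset.smul_sum]
        rw [Finset.sum_comm]
        exact Finset.sum_congr rfl fun i _ => Finset.sum_comm
    _ = (∑ i, star (w i) * w i) • 1 := by
        simp only [hC, smul_ite, smul_zero, Finset.sum_ite_eq, Finset.mem_univ, if_true,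
          Finset.sum_smul]

theorem no_cc_matrix_element_contradiction_general
    (N P : ℕ) (hN : 2 ≤ N)
    (μ : Fin P → ℝ) (hμsum : ∑ i, μ i ^ 2 = 1)
    (A B : Fin P → Fin P → Matrix (Fin N) (Fin N) ℂ)
    (hA2 : ∀ i j : Fin P, ∑ k : Fin P, (A k i)ᴴ * A k j
        = if i = j then (1 : Matrix (Fin N) (Fin N) ℂ) else 0)
    (hB2 : ∀ i j : Fin P, ∑ k : Fin P, (B k i)ᴴ * B k j
        = if i = j then (1 : Matrix (Fin N) (Fin N) ℂ) else 0)
    (e : Fin N → Fin P)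
    (hid : ∀ (m n : Fin N) (k l : Fin P),
      ∑ i : Fin P, ((μ i : ℂ)) * ((A l i * B k i) n m)
        = (Real.sqrt N : ℂ) * (if k = e m then 1 else 0) * (if l = e n then 1 else 0)) :
    False := by
  let K : Fin P × Fin P → Matrix (Fin N) (Fin N) ℂ := fun p => ∑ i, (μ i : ℂ) • (A p.2 i * B p.1 i)
  let m : Fin N := ⟨0, by omega⟩
  have sum_eq_one : ∑ p, (K p)ᴴ * K p = 1 := by
    rw [sum_conjTranspose_mul_self_of_weighted_sum (sum_conjTranspose_mul_mul_eq_ite hA2 hB2)]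
    have weights : ∑ i, star (μ i : ℂ) * μ i = 1 := by
      simp only [Complex.star_def, Complex.conj_ofReal, ← sq]
      exact_mod_cast hμsum
    rw [weights, one_smul]
  have entry_sq (p : Fin P × Fin P) (n : Fin N) :
      star (K p n m) * K p n m = if p = (e m, e n) then (N : ℂ) else 0 := by
    have hK : K p n m = ∑ i, (μ i : ℂ) * (A p.2 i * B p.1 i) n m := by
      simp only [K, Matrix.sum_apply, Matrix.smul_apply, smul_eq_mul]
    rw [hK, hid]
    simp only [Prod.ext_iff]
    split_ifs <;> simp_all [← Complex.ofReal_mul]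
  have entry_eq_sq : (∑ p, (K p)ᴴ * K p) m m = (N : ℂ) ^ 2 := by
    simp only [Matrix.sum_apply, mul_apply, conjTranspose_apply, entry_sq]
    rw [Finset.sum_comm]
    simp [sq]
  have : (N : ℂ) ^ 2 = 1 := by rw [← entry_eq_sq, sum_eq_one, one_apply_eq]
  norm_cast at this
  nlinarith

/-- Eq. (13) of the paper: the matrix-element identity
`∑ i, μ i * (A l i * B k i) n m = √N · [k = e m] · [l = e n]`, together with the
completeness relations for the local operators and the normalization `∑ i, μ i ^ 2 = 1`,
is contradictory (multiplying by the conjugate and summing over `n, k, l` gives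
`∑ i, μ i ^ 2 = N ^ 2`). -/
theorem no_cc_matrix_element_contradiction
    (N P : ℕ) (hN : 2 ≤ N) (hP : 1 ≤ P)
    (μ : Fin P → ℝ) (hμ : ∀ i, 0 ≤ μ i) (hμsum : ∑ i, μ i ^ 2 = 1)
    (A B : Fin P → Fin P → Matrix (Fin N) (Fin N) ℂ)
    (hA1 : ∀ i j : Fin P, ∑ k : Fin P, A i k * (A j k)ᴴ
        = if i = j then (1 : Matrix (Fin N) (Fin N) ℂ) else 0)
    (hA2 : ∀ i j : Fin P, ∑ k : Fin P, (A k i)ᴴ * A k j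
        = if i = j then (1 : Matrix (Fin N) (Fin N) ℂ) else 0)
    (hB1 : ∀ i j : Fin P, ∑ k : Fin P, B i k * (B j k)ᴴ
        = if i = j then (1 : Matrix (Fin N) (Fin N) ℂ) else 0)
    (hB2 : ∀ i j : Fin P, ∑ k : Fin P, (B k i)ᴴ * B k j
        = if i = j then (1 : Matrix (Fin N) (Fin N) ℂ) else 0)
    (e : Fin N → Fin P) (he : Function.Injective e)
    (hid : ∀ (m n : Fin N) (k l : Fin P),
      ∑ i : Fin P, ((μ i : ℂ)) * ((A l i * B k i) n m)
        = (Real.sqrt N : ℂ) * (if k = e m then 1 else 0) * (if l = e n then 1 else 0)) :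
    False :=
  no_cc_matrix_element_contradiction_general N P hN μ hμsum A B hA2 hB2 e hid
end

section
/- Let d ≥ 1 and let Φ be a linear map from d×d complex matrices to d×d complex matrices that maps positive semidefinite matrices to positive semidefinite matrices and preserves the trace. Let R be a positive definite d×d matrix with trace 1, and let v ∈ ℂ^d be a unit vector such that Φ(R) = vv†. Then Φ(ww†) = vv† for every unit vector w ∈ ℂ^d. -/
/-!
Since `R` is positive definite, `ε • 1 ≤ R` for some `ε > 0`, and a unit vector gives a
projection `ww† ≤ 1`; positivity of `Φ` then yields `ε • Φ(ww†) ≤ Φ R = vv†`. In the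
C⋆-algebra of matrices a positive element `A` below the projection `vv†` satisfies
`A = vv† A vv† = (v†Av) • vv†`, and comparing traces forces `Φ(ww†) = vv†`.
-/

open Matrix ComplexOrder
open scoped MatrixOrder Matrix.Norms.L2Operator

namespace Matrix

variable {n α : Type*} [Fintype n]

lemma vecMulVec_mul_mul_vecMulVec [CommSemiring α] (u x y z : n → α) (A : Matrix n n α) :
    vecMulVec u x * A * vecMulVec y z = (x ⬝ᵥ A *ᵥ y) • vecMulVec u z := by
  rw [vecMulVec_mul, vecMulVec_mul_vecMulVec, vecMulVec_smul, dotProduct_mulVec]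

lemma trace_vecMulVec_star [CommSemiring α] [StarRing α] (v : n → α) :
    (vecMulVec v (star v)).trace = star v ⬝ᵥ v := by
  rw [trace_vecMulVec, dotProduct_comm]

lemma isStarProjection_vecMulVec_star [CommSemiring α] [StarRing α] {v : n → α}
    (hv : star v ⬝ᵥ v = 1) : IsStarProjection (vecMulVec v (star v)) where
  isIdempotentElem := by
    rw [IsIdempotentElem, vecMulVec_mul_vecMulVec, hv, one_smul]
  isSelfAdjoint := by
    rw [IsSelfAdjoint, star_eq_conjTranspose, conjTranspose_vecMulVec, star_star]

lemma star_dotProduct_self_eq_one {v : n → ℂ} (hv : ∑ i, Complex.normSq (v i) = 1) :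
    star v ⬝ᵥ v = 1 := by
  simp only [dotProduct, Pi.star_apply, Complex.star_def, ← Complex.normSq_eq_conj_mul_self]
  exact_mod_cast hv

variable [DecidableEq n]

lemma PosDef.exists_pos_algebraMap_le [Nonempty n] {R : Matrix n n ℂ} (hR : R.PosDef) :
    ∃ ε > 0, algebraMap ℝ _ ε ≤ R :=
  have h := hR.isStrictlyPositive
  (CFC.exists_pos_algebraMap_le_iff h.isSelfAdjoint).2 fun _ hx ↦ h.spectrum_pos hx

lemma eq_smul_vecMulVec_of_nonneg_of_le {A : Matrix n n ℂ} {v : n → ℂ} (hv : star v ⬝ᵥ v = 1)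
    (hA : 0 ≤ A) (hAv : A ≤ vecMulVec v (star v)) :
    A = (star v ⬝ᵥ A *ᵥ v) • vecMulVec v (star v) := calc
  A = vecMulVec v (star v) * A * vecMulVec v (star v) :=
    ((isStarProjection_vecMulVec_star hv).conjugate_of_nonneg_of_le hA hAv).symm
  _ = _ := vecMulVec_mul_mul_vecMulVec ..

lemma eq_vecMulVec_of_smul_le {A : Matrix n n ℂ} {v : n → ℂ} (hv : star v ⬝ᵥ v = 1)
    (hA : 0 ≤ A) (htr : A.trace = 1) {ε : ℂ} (hε : 0 < ε)
    (hle : ε • A ≤ vecMulVec v (star v)) : A = vecMulVec v (star v) := by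
  have h := eq_smul_vecMulVec_of_nonneg_of_le hv (hA.posSemidef.smul hε.le).nonneg hle
  have hc : ε = star v ⬝ᵥ (ε • A) *ᵥ v := by
    simpa only [trace_smul, htr, trace_vecMulVec_star, hv, smul_eq_mul, mul_one]
      using congrArg trace h
  rw [← hc] at h
  exact smul_right_injective _ hε.ne' h

end Matrix

theorem positive_map_fullrank_to_pure_general
    (d : ℕ) (hd : 1 ≤ d)
    (Φ : Matrix (Fin d) (Fin d) ℂ →ₗ[ℂ] Matrix (Fin d) (Fin d) ℂ)
    (hpos : ∀ X : Matrix (Fin d) (Fin d) ℂ, X.PosSemidef → (Φ X).PosSemidef)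
    (htr : ∀ X : Matrix (Fin d) (Fin d) ℂ, (Φ X).trace = X.trace)
    (R : Matrix (Fin d) (Fin d) ℂ) (hR : R.PosDef)
    (v : Fin d → ℂ) (hv : ∑ i, Complex.normSq (v i) = 1)
    (hΦR : Φ R = Matrix.vecMulVec v (star v)) :
    ∀ w : Fin d → ℂ, (∑ i, Complex.normSq (w i) = 1) →
      Φ (Matrix.vecMulVec w (star w)) = Matrix.vecMulVec v (star v) := by
  intro w hw
  have hw1 := star_dotProduct_self_eq_one hw
  have : Nonempty (Fin d) := ⟨⟨0, hd⟩⟩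
  obtain ⟨ε, hε, hεR⟩ := hR.exists_pos_algebraMap_le
  have hΦ : Monotone Φ := fun A B h ↦ by simpa only [le_iff, map_sub] using hpos _ h
  have hεw : (ε : ℂ) • vecMulVec w (star w) ≤ algebraMap ℝ _ ε := by
    rw [le_iff, Algebra.algebraMap_eq_smul_one, ← Complex.coe_smul, ← smul_sub]
    exact (isStarProjection_vecMulVec_star hw1).one_sub_nonneg.posSemidef.smul
      (by exact_mod_cast hε.le)
  refine eq_vecMulVec_of_smul_le (star_dotProduct_self_eq_one hv)
    (hpos _ (isStarProjection_vecMulVec_star hw1).nonneg.posSemidef).nonneg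
    ((htr _).trans ((trace_vecMulVec_star w).trans hw1))
    (by exact_mod_cast hε : (0 : ℂ) < ε) ?_
  calc (ε : ℂ) • Φ (vecMulVec w (star w)) = Φ ((ε : ℂ) • vecMulVec w (star w)) :=
        (map_smul ..).symm
    _ ≤ Φ R := hΦ (hεw.trans hεR)
    _ = vecMulVec v (star v) := hΦR

/-- A positive trace-preserving linear map `Φ` sending a full-rank state `R`
(positive definite, unit trace) to a pure state `vv†` must send every pure state
`ww†` to `vv†`. -/
theorem positive_map_fullrank_to_pure
    (d : ℕ) (hd : 1 ≤ d)
    (Φ : Matrix (Fin d) (Fin d) ℂ →ₗ[ℂ] Matrix (Fin d) (Fin d) ℂ)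
    (hpos : ∀ X : Matrix (Fin d) (Fin d) ℂ, X.PosSemidef → (Φ X).PosSemidef)
    (htr : ∀ X : Matrix (Fin d) (Fin d) ℂ, (Φ X).trace = X.trace)
    (R : Matrix (Fin d) (Fin d) ℂ) (hR : R.PosDef) (hRtr : R.trace = 1)
    (v : Fin d → ℂ) (hv : ∑ i, Complex.normSq (v i) = 1)
    (hΦR : Φ R = Matrix.vecMulVec v (star v)) :
    ∀ w : Fin d → ℂ, (∑ i, Complex.normSq (w i) = 1) →
      Φ (Matrix.vecMulVec w (star w)) = Matrix.vecMulVec v (star v) :=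
  positive_map_fullrank_to_pure_general d hd Φ hpos htr R hR v hv hΦR
end

section
/- Universality of quantum teleportation (Eq. (5) of the paper): fix N ≥ 2, let ρ be any N×N complex matrix, and let (E_t)_{t∈Fin K} be N²×N² complex matrices (rows and columns indexed by Fin N × Fin N, Kraus operators of an arbitrary trace-preserving channel ε acting on the sender's joint system A⊗a) satisfying Σ_{t∈Fin K} (E_t)† E_t = 1_{N²}. Define ρ_out := Σ_{n,m∈Fin N} W_{n,m} · TrAa[ Σ_{t∈Fin K} (E_t ⊗ 1_N)(P_{n,m} ⊗ 1_N)(ρ ⊗ Ψ₀)(P_{n,m} ⊗ 1_N)((E_t)† ⊗ 1_N) ] · (W_{n,m})†, where P_{n,m} = ψ_{n,m}(ψ_{n,m})† is the Bell projection on A⊗a, ρ ⊗ Ψ₀ is the N³×N³ matrix with entries (ρ ⊗ Ψ₀)_{(a,b,c),(a',b',c')} = ρ_{a,a'} · (Ψ₀)_{(b,c),(b',c')} (tensor factor order A, a, b), and TrAa denotes the partial trace over the first two factors, (TrAa X)_{c,c'} = Σ_{a,b∈Fin N} X_{(a,b,c),(a,b,c')}. Then ρ_out = ρ: the teleportation protocol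 transmits every state faithfully and deterministically, whatever the noisy channel ε. -/
/-!
Write `X ↦ X ⊗ 1` for the ampliation of operators on A⊗a to A⊗a⊗b and `Tr_Aa` for the partial
trace. Since `Tr_Aa ((A ⊗ 1) Y) = Tr_Aa (Y (A ⊗ 1))`, any channel acting on the traced-out
systems disappears under `Tr_Aa` once `∑ Eₜᴴ Eₜ = 1`, and so does the second Bell projection
`P ⊗ 1`, which is idempotent. What remains is `Tr_Aa ((P ⊗ 1)(ρ ⊗ Ψ₀))`; when `P` projects onto
the vectorisation of `s • U`, this equals `Mᴴ ρ M` for `M = |s|² U`. The Weyl matrices are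
unitary, so the correction `W` undoes `M` and each of the `N²` outcomes contributes `ρ / N²`.
-/

open Matrix
open scoped Kronecker

namespace Matrix

variable {α β γ R : Type*}

section Ampliation

variable [DecidableEq γ] [CommSemiring R]

def ampliate (X : Matrix (α × β) (α × β) R) : Matrix (α × β × γ) (α × β × γ) R :=
  (X ⊗ₖ (1 : Matrix γ γ R)).submatrix (Equiv.prodAssoc α β γ).symm (Equiv.prodAssoc α β γ).symm

theorem ampliate_apply (X : Matrix (α × β) (α × β) R) (p q : α × β × γ) :
    ampliate X p q = X (p.1, p.2.1) (q.1, q.2.1) * if p.2.2 = q.2.2 then 1 else 0 := by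
  simp [ampliate, one_apply]

theorem ampliate_one [DecidableEq α] [DecidableEq β] :
    ampliate (γ := γ) (1 : Matrix (α × β) (α × β) R) = 1 := by
  simp [ampliate]

theorem ampliate_sum {ι : Type*} (s : Finset ι) (X : ι → Matrix (α × β) (α × β) R) :
    ampliate (γ := γ) (∑ i ∈ s, X i) = ∑ i ∈ s, ampliate (X i) := by
  ext p q
  simp [ampliate_apply, Matrix.sum_apply]

variable [Fintype α] [Fintype β] [Fintype γ]

theorem ampliate_mul (X Y : Matrix (α × β) (α × β) R) :
    ampliate (γ := γ) (X * Y) = ampliate (γ := γ) X * ampliate (γ := γ) Y := by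
  rw [ampliate, ampliate, ampliate, submatrix_mul_equiv, ← mul_kronecker_mul, one_mul]

end Ampliation

section PartialTrace

variable [Fintype α] [Fintype β]

def partialTrace [AddCommMonoid R] (X : Matrix (α × β × γ) (α × β × γ) R) : Matrix γ γ R :=
  of fun c c' => ∑ ab : α × β, X (ab.1, ab.2, c) (ab.1, ab.2, c')

theorem partialTrace_sum [AddCommMonoid R] {ι : Type*} (s : Finset ι)
    (X : ι → Matrix (α × β × γ) (α × β × γ) R) :
    partialTrace (∑ i ∈ s, X i) = ∑ i ∈ s, partialTrace (X i) := by
  ext c c'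
  simp only [partialTrace, of_apply, Matrix.sum_apply]
  exact Finset.sum_comm

variable [CommSemiring R] [Fintype γ] [DecidableEq γ]

theorem partialTrace_ampliate_mul_comm (A : Matrix (α × β) (α × β) R)
    (Y : Matrix (α × β × γ) (α × β × γ) R) :
    partialTrace (ampliate A * Y) = partialTrace (Y * ampliate A) := by
  ext c c'
  simp only [partialTrace, of_apply, mul_apply, ← (Equiv.prodAssoc α β γ).sum_comp,
    Fintype.sum_prod_type (α₁ := α × β), ampliate_apply]
  simp only [Equiv.prodAssoc_apply, ite_mul, mul_ite, mul_one, zero_mul, mul_zero,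
    Finset.sum_ite_eq, Finset.sum_ite_eq', Finset.mem_univ, if_true]
  exact Finset.sum_comm.trans
    (Finset.sum_congr rfl fun _ _ => Finset.sum_congr rfl fun _ _ => mul_comm _ _)

theorem partialTrace_sum_ampliate_mul_mul [DecidableEq α] [DecidableEq β] {ι : Type*}
    (s : Finset ι) (E F : ι → Matrix (α × β) (α × β) R) (hFE : ∑ i ∈ s, F i * E i = 1)
    (Y : Matrix (α × β × γ) (α × β × γ) R) :
    partialTrace (∑ i ∈ s, ampliate (E i) * Y * ampliate (F i)) = partialTrace Y := by
  calc partialTrace (∑ i ∈ s, ampliate (E i) * Y * ampliate (F i))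
      = ∑ i ∈ s, partialTrace (Y * ampliate (F i * E i)) := by
        rw [partialTrace_sum]
        refine Finset.sum_congr rfl fun i _ => ?_
        rw [mul_assoc, partialTrace_ampliate_mul_comm, ampliate_mul, mul_assoc]
    _ = partialTrace Y := by
        rw [← partialTrace_sum, ← Finset.mul_sum, ← ampliate_sum, hFE, ampliate_one, mul_one]

theorem partialTrace_ampliate_mul_mul_ampliate_of_idempotent {P : Matrix (α × β) (α × β) R}
    (hP : IsIdempotentElem P) (X : Matrix (α × β × γ) (α × β × γ) R) :
    partialTrace (ampliate P * X * ampliate P) = partialTrace (ampliate P * X) := by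
  rw [← partialTrace_ampliate_mul_comm, ← mul_assoc, ← ampliate_mul, hP.eq]

theorem partialTrace_ampliate_vecMulVec_mul_kronecker [StarRing R] (U : Matrix α β R)
    (V : Matrix β γ R) (ρ : Matrix α α R) :
    partialTrace (ampliate (vecMulVec (Function.uncurry U) (star (Function.uncurry U))) *
        ρ ⊗ₖ vecMulVec (Function.uncurry V) (star (Function.uncurry V))) =
      (U * V.map star)ᴴ * ρ * (U * V.map star) := by
  ext c c'
  simp [partialTrace, mul_apply, ampliate_apply, vecMulVec_apply, Fintype.sum_prod_type,
    Finset.sum_mul, Finset.mul_sum, Function.uncurry]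
  refine Finset.sum_congr rfl fun _ _ => Finset.sum_congr rfl fun _ _ =>
    Finset.sum_congr rfl fun _ _ => Finset.sum_congr rfl fun _ _ => ?_
  ring

end PartialTrace

theorem isIdempotentElem_vecMulVec_star {n : Type*} [Fintype n] [Semiring R] [StarRing R]
    {v : n → R} (hv : star v ⬝ᵥ v = 1) : IsIdempotentElem (vecMulVec v (star v)) := by
  rw [IsIdempotentElem, vecMulVec_mul_vecMulVec, hv, one_smul]

theorem star_uncurry_dotProduct_uncurry [Fintype α] [Fintype β] [CommSemiring R] [StarRing R]
    (U : Matrix α β R) : star (Function.uncurry U) ⬝ᵥ Function.uncurry U = trace (U * Uᴴ) := by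
  simp [dotProduct, trace, mul_apply, Fintype.sum_prod_type, mul_comm, Function.uncurry]

end Matrix

def weyl {R : Type*} [Semiring R] {N : ℕ} (ω : R) (n m : Fin N) : Matrix (Fin N) (Fin N) R :=
  of fun k k' => ω ^ ((k : ℕ) * (n : ℕ)) * if k' = k + m then 1 else 0

theorem weyl_mul_conjTranspose_self {R : Type*} [CommSemiring R] [StarRing R] {N : ℕ} {ω : R}
    (hω : ω * star ω = 1) (n m : Fin N) : weyl ω n m * (weyl ω n m)ᴴ = 1 := by
  ext k k'
  simp only [weyl, mul_apply, conjTranspose_apply, of_apply, apply_ite star, star_zero,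
    mul_ite, ite_mul, mul_one, mul_zero, zero_mul, Finset.sum_ite_eq', Finset.mem_univ, if_true,
    add_left_inj, one_apply]
  obtain rfl | hkk' := eq_or_ne k k'
  · simp [star_pow, ← mul_pow, hω]
  · simp [hkk', hkk'.symm]

theorem exp_two_pi_I_div_mul_star (N : ℕ) :
    Complex.exp (2 * Real.pi * Complex.I / N) * star (Complex.exp (2 * Real.pi * Complex.I / N)) =
      1 := by
  have hω : Complex.exp (2 * Real.pi * Complex.I / N) =
      Complex.exp ((2 * Real.pi / N : ℝ) * Complex.I) := by
    push_cast
    ring_nf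
  rw [Complex.star_def, Complex.mul_conj', hω, Complex.norm_exp_ofReal_mul_I, Complex.ofReal_one,
    one_pow]

theorem one_div_sqrt_mul_star_mul_self {N : ℕ} (hN : N ≠ 0) :
    1 / (Real.sqrt N : ℂ) * star (1 / (Real.sqrt N : ℂ)) * N = 1 := by
  have hsqrt : ((Real.sqrt N : ℝ) : ℂ) * (Real.sqrt N : ℝ) = N := by
    norm_cast
    exact Real.mul_self_sqrt (Nat.cast_nonneg N)
  rw [Complex.star_def, map_div₀, map_one, Complex.conj_ofReal, div_mul_div_comm, one_mul, hsqrt,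
    one_div_mul_cancel (Nat.cast_ne_zero.mpr hN)]

theorem partialTrace_teleportation_outcome {R ι κ : Type*} [Field R] [StarRing R] [Fintype ι]
    [DecidableEq ι] [Fintype κ] {s : R} (hs : s * star s * Fintype.card ι = 1)
    {U : Matrix ι ι R} (hU : U * Uᴴ = 1) (E : κ → Matrix (ι × ι) (ι × ι) R)
    (hE : ∑ t, (E t)ᴴ * E t = 1) (ρ : Matrix ι ι R) :
    let P := vecMulVec (Function.uncurry (s • U)) (star (Function.uncurry (s • U)))
    let Ψ₀ := vecMulVec (Function.uncurry (s • (1 : Matrix ι ι R)))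
      (star (Function.uncurry (s • (1 : Matrix ι ι R))))
    U * partialTrace (∑ t, ampliate (E t) * ampliate P * ρ ⊗ₖ Ψ₀ * ampliate P *
      ampliate (E t)ᴴ) * Uᴴ = (Fintype.card ι : R)⁻¹ ^ 2 • ρ := by
  intro P Ψ₀
  have hc : s * star s = (Fintype.card ι : R)⁻¹ := eq_inv_of_mul_eq_one_left hs
  have hP : IsIdempotentElem P := by
    refine isIdempotentElem_vecMulVec_star ?_
    rw [star_uncurry_dotProduct_uncurry, conjTranspose_smul, smul_mul_smul_comm, hU, trace_smul,
      trace_one, smul_eq_mul, hs]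
  have hM : (s • U) * (s • (1 : Matrix ι ι R)).map star = (Fintype.card ι : R)⁻¹ • U := by
    have hconj : (s • (1 : Matrix ι ι R)).map star = star s • 1 := by
      ext i j
      simp [one_apply, apply_ite star]
    rw [hconj, smul_mul_smul_comm, mul_one, hc]
  have hreassoc : ∀ t, ampliate (E t) * ampliate P * ρ ⊗ₖ Ψ₀ * ampliate P * ampliate (E t)ᴴ =
      ampliate (E t) * (ampliate P * ρ ⊗ₖ Ψ₀ * ampliate P) * ampliate (E t)ᴴ := fun t => by
    simp only [mul_assoc]
  simp only [hreassoc]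
  rw [partialTrace_sum_ampliate_mul_mul _ _ _ hE,
    partialTrace_ampliate_mul_mul_ampliate_of_idempotent hP,
    partialTrace_ampliate_vecMulVec_mul_kronecker, hM]
  simp only [conjTranspose_smul, star_inv₀, star_natCast, Matrix.smul_mul, Matrix.mul_smul,
    smul_smul, ← mul_assoc, hU, one_mul]
  rw [mul_assoc, hU, mul_one, sq]

theorem teleportation_universal_general
    (N K : ℕ) (hN : 2 ≤ N)
    (ω : ℂ) (hω : ω = Complex.exp (2 * Real.pi * Complex.I / N))
    (ψ₀ : Fin N × Fin N → ℂ)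
    (hψ₀ : ∀ i j : Fin N, ψ₀ (i, j) = (1 / (Real.sqrt N : ℂ)) * (if i = j then 1 else 0))
    (Ψ₀ : Matrix (Fin N × Fin N) (Fin N × Fin N) ℂ)
    (hΨ₀ : ∀ q q' : Fin N × Fin N, Ψ₀ q q' = ψ₀ q * (starRingEnd ℂ) (ψ₀ q'))
    (ψ : Fin N → Fin N → Fin N × Fin N → ℂ)
    (hψ : ∀ n m k k' : Fin N,
      ψ n m (k, k') = (1 / (Real.sqrt N : ℂ)) * ω ^ ((k : ℕ) * (n : ℕ)) *
        (if k' = k + m then 1 else 0))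
    (P : Fin N → Fin N → Matrix (Fin N × Fin N) (Fin N × Fin N) ℂ)
    (hP : ∀ (n m : Fin N) (q q' : Fin N × Fin N),
      P n m q q' = ψ n m q * (starRingEnd ℂ) (ψ n m q'))
    (W : Fin N → Fin N → Matrix (Fin N) (Fin N) ℂ)
    (hW : ∀ n m k k' : Fin N,
      W n m k k' = ω ^ ((k : ℕ) * (n : ℕ)) * (if k' = k + m then 1 else 0))
    (E : Fin K → Matrix (Fin N × Fin N) (Fin N × Fin N) ℂ)
    (hE : ∑ t : Fin K, (E t)ᴴ * E t = 1)
    (ρ : Matrix (Fin N) (Fin N) ℂ)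
    (lift : Matrix (Fin N × Fin N) (Fin N × Fin N) ℂ →
      Matrix (Fin N × Fin N × Fin N) (Fin N × Fin N × Fin N) ℂ)
    (hlift : ∀ (X : Matrix (Fin N × Fin N) (Fin N × Fin N) ℂ)
      (p q : Fin N × Fin N × Fin N),
      lift X p q = X (p.1, p.2.1) (q.1, q.2.1) * (if p.2.2 = q.2.2 then 1 else 0))
    (ρΨ : Matrix (Fin N × Fin N × Fin N) (Fin N × Fin N × Fin N) ℂ)
    (hρΨ : ∀ p q : Fin N × Fin N × Fin N,
      ρΨ p q = ρ p.1 q.1 * Ψ₀ (p.2.1, p.2.2) (q.2.1, q.2.2))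
    (trAa : Matrix (Fin N × Fin N × Fin N) (Fin N × Fin N × Fin N) ℂ →
      Matrix (Fin N) (Fin N) ℂ)
    (htrAa : ∀ (X : Matrix (Fin N × Fin N × Fin N) (Fin N × Fin N × Fin N) ℂ)
      (c c' : Fin N), trAa X c c' = ∑ a : Fin N, ∑ b : Fin N, X (a, b, c) (a, b, c')) :
    ∑ n : Fin N, ∑ m : Fin N,
      W n m *
        trAa (∑ t : Fin K,
          lift (E t) * lift (P n m) * ρΨ * lift (P n m) * lift ((E t)ᴴ)) *
        (W n m)ᴴ = ρ := by
  set s : ℂ := 1 / (Real.sqrt N : ℂ)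
  have hs : s * star s * Fintype.card (Fin N) = 1 := by
    rw [Fintype.card_fin]
    exact one_div_sqrt_mul_star_mul_self (by omega)
  have hω1 : ω * star ω = 1 := hω ▸ exp_two_pi_I_div_mul_star N
  have hlift' : lift = ampliate := funext fun X => ext fun p q =>
    (hlift X p q).trans (ampliate_apply X p q).symm
  have htrAa' : trAa = partialTrace := funext fun X => ext fun c c' => by
    rw [htrAa, partialTrace, of_apply, Fintype.sum_prod_type]
  have hρΨ' : ρΨ = ρ ⊗ₖ Ψ₀ := ext hρΨ
  have hW' : W = weyl ω := funext₂ fun n m => ext (hW n m)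
  have hψ₀' : ψ₀ = Function.uncurry (s • (1 : Matrix (Fin N) (Fin N) ℂ)) := funext fun q => by
    simp [hψ₀, one_apply, Function.uncurry]
  have hψ' : ψ = fun n m => Function.uncurry (s • weyl ω n m) := by
    ext n m q
    simp [hψ, weyl, Function.uncurry]
  have hΨ₀' : Ψ₀ = vecMulVec ψ₀ (star ψ₀) := ext hΨ₀
  have hP' : P = fun n m => vecMulVec (ψ n m) (star (ψ n m)) := funext₂ fun n m => ext (hP n m)
  subst hlift' htrAa' hρΨ' hW' hψ₀' hψ' hΨ₀' hP'
  simp only [partialTrace_teleportation_outcome hs (weyl_mul_conjTranspose_self hω1 _ _) E hE,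
    Finset.sum_const, Finset.card_univ, Fintype.card_fin, ← Nat.cast_smul_eq_nsmul ℂ, smul_smul]
  rw [← mul_assoc, ← sq, ← mul_pow, mul_inv_cancel₀ (by exact_mod_cast (show N ≠ 0 by omega)),
    one_pow, one_smul]

/-- Universality of quantum teleportation (Eq. (5) of the paper): for any input
state `ρ` and any trace-preserving channel `ε` (Kraus operators `E t`) acting on the
sender's joint system A⊗a, the teleportation protocol — Bell measurement `P n m` on
A⊗a, transmission of the measured system through `ε`, discarding A⊗a, and correction
`W n m` on b — returns exactly `ρ`. Here `lift X = X ⊗ 1` embeds operators on A⊗a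
into A⊗a⊗b, `ρΨ = ρ ⊗ Ψ₀` is the initial tripartite state, and `trAa` is the partial
trace over the first two factors. -/
theorem teleportation_universal
    (N K : ℕ) (hN : 2 ≤ N) (hK : 1 ≤ K)
    (ω : ℂ) (hω : ω = Complex.exp (2 * Real.pi * Complex.I / N))
    (ψ₀ : Fin N × Fin N → ℂ)
    (hψ₀ : ∀ i j : Fin N, ψ₀ (i, j) = (1 / (Real.sqrt N : ℂ)) * (if i = j then 1 else 0))
    (Ψ₀ : Matrix (Fin N × Fin N) (Fin N × Fin N) ℂ)
    (hΨ₀ : ∀ q q' : Fin N × Fin N, Ψ₀ q q' = ψ₀ q * (starRingEnd ℂ) (ψ₀ q'))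
    (ψ : Fin N → Fin N → Fin N × Fin N → ℂ)
    (hψ : ∀ n m k k' : Fin N,
      ψ n m (k, k') = (1 / (Real.sqrt N : ℂ)) * ω ^ ((k : ℕ) * (n : ℕ)) *
        (if k' = k + m then 1 else 0))
    (P : Fin N → Fin N → Matrix (Fin N × Fin N) (Fin N × Fin N) ℂ)
    (hP : ∀ (n m : Fin N) (q q' : Fin N × Fin N),
      P n m q q' = ψ n m q * (starRingEnd ℂ) (ψ n m q'))
    (W : Fin N → Fin N → Matrix (Fin N) (Fin N) ℂ)
    (hW : ∀ n m k k' : Fin N,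
      W n m k k' = ω ^ ((k : ℕ) * (n : ℕ)) * (if k' = k + m then 1 else 0))
    (E : Fin K → Matrix (Fin N × Fin N) (Fin N × Fin N) ℂ)
    (hE : ∑ t : Fin K, (E t)ᴴ * E t = 1)
    (ρ : Matrix (Fin N) (Fin N) ℂ)
    (lift : Matrix (Fin N × Fin N) (Fin N × Fin N) ℂ →
      Matrix (Fin N × Fin N × Fin N) (Fin N × Fin N × Fin N) ℂ)
    (hlift : ∀ (X : Matrix (Fin N × Fin N) (Fin N × Fin N) ℂ)
      (p q : Fin N × Fin N × Fin N),
      lift X p q = X (p.1, p.2.1) (q.1, q.2.1) * (if p.2.2 = q.2.2 then 1 else 0))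
    (ρΨ : Matrix (Fin N × Fin N × Fin N) (Fin N × Fin N × Fin N) ℂ)
    (hρΨ : ∀ p q : Fin N × Fin N × Fin N,
      ρΨ p q = ρ p.1 q.1 * Ψ₀ (p.2.1, p.2.2) (q.2.1, q.2.2))
    (trAa : Matrix (Fin N × Fin N × Fin N) (Fin N × Fin N × Fin N) ℂ →
      Matrix (Fin N) (Fin N) ℂ)
    (htrAa : ∀ (X : Matrix (Fin N × Fin N × Fin N) (Fin N × Fin N × Fin N) ℂ)
      (c c' : Fin N), trAa X c c' = ∑ a : Fin N, ∑ b : Fin N, X (a, b, c) (a, b, c')) :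
    ∑ n : Fin N, ∑ m : Fin N,
      W n m *
        trAa (∑ t : Fin K,
          lift (E t) * lift (P n m) * ρΨ * lift (P n m) * lift ((E t)ᴴ)) *
        (W n m)ᴴ = ρ :=
  teleportation_universal_general N K hN ω hω ψ₀ hψ₀ Ψ₀ hΨ₀ ψ hψ P hP W hW E hE ρ lift hlift ρΨ hρΨ
    trAa htrAa
end

section
/- Fix N ≥ 1 and K ≥ 1, let (E_t)_{t∈Fin K} be N×N complex matrices, and let R be their Choi–Jamiolkowski matrix, R_{(i,j),(i',j')} = (1/N) · Σ_{t∈Fin K} (E_t)_{i,j} · conj((E_t)_{i',j'}). Then (a) Matrix.rank R ≤ K, and (b) there exists a family (F_s)_{s∈Fin r} of N×N complex matrices with r = Matrix.rank R whose Choi–Jamiolkowski matrix equals R (hence representing the same channel with the minimal number of Kraus operators). In particular, the minimal number of Kraus operators representing a channel (its rank) equals the rank of its Choi matrix, and a channel has maximal rank N² exactly when its Choi matrix is positive definite. -/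
/-!
Writing `M` for the `N² × K` matrix whose columns are the vectorised Kraus operators, the Choi
matrix is `N⁻¹ • M * Mᴴ`, so its rank is `rank M ≤ K`. Conversely, the entries of `M * Mᴴ` are
the inner products of the rows of `M`; expanding these rows in an orthonormal basis of their span,
which has dimension `rank M`, factors `M * Mᴴ = C * Cᴴ` with `C` of width `rank M`, and the columns
of `C` are the minimal Kraus family.
-/

open Matrix
open scoped InnerProductSpace ComplexOrder

namespace Matrix

variable {𝕜 m n : Type*} [RCLike 𝕜] [Fintype m] [Fintype n]

theorem finrank_span_toLp_rows (M : Matrix m n 𝕜) :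
    Module.finrank 𝕜 (Submodule.span 𝕜 (Set.range fun p ↦ WithLp.toLp 2 (M p))) = M.rank := by
  rw [rank_eq_finrank_span_row, ← (WithLp.linearEquiv 2 𝕜 (n → 𝕜)).finrank_map_eq,
    Submodule.map_span, ← Set.range_comp]
  rfl

theorem exists_mul_conjTranspose_eq (M : Matrix m n 𝕜) :
    ∃ C : Matrix m (Fin M.rank) 𝕜, C * Cᴴ = M * Mᴴ := by
  let W := Submodule.span 𝕜 (Set.range fun p ↦ WithLp.toLp 2 (M p))
  let v : m → W := fun p ↦ ⟨WithLp.toLp 2 (M p), Submodule.subset_span ⟨p, rfl⟩⟩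
  let b := stdOrthonormalBasis 𝕜 W
  rw [← finrank_span_toLp_rows]
  refine ⟨of fun p s ↦ ⟪b s, v p⟫_𝕜, ?_⟩
  ext p q
  calc ((of fun p s ↦ ⟪b s, v p⟫_𝕜) * (of fun p s ↦ ⟪b s, v p⟫_𝕜)ᴴ) p q
      = ∑ s, ⟪v q, b s⟫_𝕜 * ⟪b s, v p⟫_𝕜 := by
        simp only [mul_apply, conjTranspose_apply, of_apply, RCLike.star_def, inner_conj_symm]
        exact Finset.sum_congr rfl fun s _ ↦ mul_comm _ _
    _ = ⟪v q, v p⟫_𝕜 := b.sum_inner_mul_inner _ _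
    _ = (M * Mᴴ) p q := by
        simp only [Submodule.coe_inner, v, PiLp.inner_apply, RCLike.inner_apply, mul_apply,
          conjTranspose_apply, RCLike.star_def]

end Matrix

theorem choi_rank_minimal_kraus_general
    (N K : ℕ) (hN : 1 ≤ N)
    (E : Fin K → Matrix (Fin N) (Fin N) ℂ)
    (R : Matrix (Fin N × Fin N) (Fin N × Fin N) ℂ)
    (hR : ∀ p q : Fin N × Fin N,
      R p q = (1 / (N : ℂ)) * ∑ t : Fin K, E t p.1 p.2 * (starRingEnd ℂ) (E t q.1 q.2)) :
    R.rank ≤ K ∧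
      ∃ F : Fin R.rank → Matrix (Fin N) (Fin N) ℂ,
        ∀ p q : Fin N × Fin N,
          R p q = (1 / (N : ℂ)) *
            ∑ s : Fin R.rank, F s p.1 p.2 * (starRingEnd ℂ) (F s q.1 q.2) := by
  let M : Matrix (Fin N × Fin N) (Fin K) ℂ := of fun p t ↦ E t p.1 p.2
  have hRM : R = (N : ℂ)⁻¹ • (M * Mᴴ) := by
    ext p q
    simp [hR, M, mul_apply, Finset.mul_sum]
  have hrank : R.rank = M.rank := by
    rw [hRM, rank_smul_of_mem_nonZeroDivisors _ (mem_nonZeroDivisors_of_ne_zero (by positivity)),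
      rank_self_mul_conjTranspose]
  refine ⟨hrank ▸ (M.rank_le_card_width.trans_eq (Fintype.card_fin K)), ?_⟩
  obtain ⟨C, hC⟩ := M.exists_mul_conjTranspose_eq
  rw [hrank]
  refine ⟨fun s ↦ of fun i j ↦ C (i, j) s, fun p q ↦ ?_⟩
  rw [hRM, Matrix.smul_apply, smul_eq_mul, one_div, ← hC]
  rfl

/-- (a) The rank of the Choi–Jamiolkowski matrix `R` of a Kraus family `(E t)_{t < K}`
is at most `K`; (b) there is a Kraus family of size exactly `Matrix.rank R` with the
same Choi matrix (hence representing the same channel with the minimal number of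
Kraus operators). -/
theorem choi_rank_minimal_kraus
    (N K : ℕ) (hN : 1 ≤ N) (hK : 1 ≤ K)
    (E : Fin K → Matrix (Fin N) (Fin N) ℂ)
    (R : Matrix (Fin N × Fin N) (Fin N × Fin N) ℂ)
    (hR : ∀ p q : Fin N × Fin N,
      R p q = (1 / (N : ℂ)) * ∑ t : Fin K, E t p.1 p.2 * (starRingEnd ℂ) (E t q.1 q.2)) :
    R.rank ≤ K ∧
      ∃ F : Fin R.rank → Matrix (Fin N) (Fin N) ℂ,
        ∀ p q : Fin N × Fin N,
          R p q = (1 / (N : ℂ)) *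
            ∑ s : Fin R.rank, F s p.1 p.2 * (starRingEnd ℂ) (F s q.1 q.2) :=
  choi_rank_minimal_kraus_general N K hN E R hR
end
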